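/- arXiv:2002.02396 — 6 statements merged into one kernel-verified Lean document; each statement's English description precedes it below -/
import Mathlib

section
/- Assume MA(ω₁). Then every Aronszajn tree is special, i.e. is the union of countably many antichains. -/
universe u

open Cardinal Ordinal Set Classical

noncomputable def omega1 : Ordinal.{u} := (Cardinal.aleph 1).ord

/-- A tree: a partial order in which the set of strict predecessors of each element
is well-ordered by `<`. -/
def IsTree (T : Type u) [PartialOrder T] : Prop :=
  ∀ x : T, IsWellOrder {y : T // y < x} (fun a b => (a : T) < (b : T))

/-- The height of an element of a tree: the order type of its set of strict predecessors. -/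
noncomputable def treeHeight {T : Type u} [PartialOrder T] (x : T) : Ordinal.{u} :=
  if h : IsWellOrder {y : T // y < x} (fun a b => (a : T) < (b : T)) then
    @Ordinal.type _ _ h else 0

/-- The tree has height `ω₁`: every level below `ω₁` is nonempty and the level `ω₁` is empty
(equivalently, all heights are `< ω₁`). -/
def HasHeightOmega1 (T : Type u) [PartialOrder T] : Prop :=
  (∀ α : Ordinal.{u}, α < omega1.{u} → ∃ x : T, treeHeight x = α) ∧
    ∀ x : T, treeHeight x < omega1.{u}

def NoUncountableChain (T : Type u) [PartialOrder T] : Prop :=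
  ∀ C : Set T, IsChain (· < ·) C → C.Countable

def IsWideAronszajn (T : Type u) [PartialOrder T] : Prop :=
  IsTree T ∧ Cardinal.mk T = Cardinal.aleph.{u} 1 ∧ HasHeightOmega1 T ∧ NoUncountableChain T

def IsAronszajn (T : Type u) [PartialOrder T] : Prop :=
  IsTree T ∧ HasHeightOmega1 T ∧
    (∀ α : Ordinal.{u}, {x : T | treeHeight x = α}.Countable) ∧ NoUncountableChain T

def IsWeakEmbedding {T₁ T₂ : Type u} [PartialOrder T₁] [PartialOrder T₂] (f : T₁ → T₂) : Prop :=
  ∀ x y : T₁, x < y → f x < f y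

/-- Martin's axiom for ℵ₁ many dense sets. -/
def MAomega1 : Prop :=
  ∀ (P : Type u) [PartialOrder P], Nonempty P →
    (∀ A : Set P, (A.Pairwise fun p q => ¬ ∃ r, p ≤ r ∧ q ≤ r) → A.Countable) →
    ∀ 𝒟 : Set (Set P), Cardinal.mk 𝒟 ≤ Cardinal.aleph.{u} 1 →
      (∀ D ∈ 𝒟, ∀ p : P, ∃ q ∈ D, p ≤ q) →
      ∃ G : Set P, (∀ p ∈ G, ∀ q ∈ G, ∃ r ∈ G, p ≤ r ∧ q ≤ r) ∧
        (∀ p ∈ G, ∀ q, q ≤ p → q ∈ G) ∧ ∀ D ∈ 𝒟, (G ∩ D).Nonempty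

/-- A bundled partially ordered type. -/
structure PoType : Type (u + 1) where
  carrier : Type u
  str : PartialOrder carrier

attribute [instance] PoType.str

/-- A tree is special if it is the union of countably many antichains. -/
def IsSpecialTree (T : Type u) [PartialOrder T] : Prop :=
  ∃ A : ℕ → Set T, (∀ n, IsAntichain (· ≤ ·) (A n)) ∧ ∀ x : T, ∃ n, x ∈ A n

/-!
Baumgartner's specializing forcing consists of the finite partial maps `T → ℕ` that are injective
on chains, ordered by extension. A filter meeting the `ℵ₁` dense sets `{p | x ∈ dom p}` glues to a
map `T → ℕ` injective on chains, whose fibres are antichains.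

MA(ω₁) applies once the forcing is ccc. Given uncountably many conditions, a Δ-system argument
and pigeonhole make uncountably many of them agree on a common root, and two of those whose tails
are pairwise incomparable are compatible. Such a pair exists because, by MA(ω₁) again, every
uncountable subset of an Aronszajn tree contains an uncountable antichain (otherwise a generic
filter through its points with uncountable cones would be an uncountable branch): thinning the
tails one point at a time into antichains leaves each tail above only finitely many other tails.
-/

theorem Set.exists_not_countable_fiber {α β : Type*} {s : Set α} {t : Set β} (f : α → β)
    (hs : ¬ s.Countable) (ht : t.Countable) (hf : MapsTo f s t) :
    ∃ b ∈ t, ¬ {a ∈ s | f a = b}.Countable := by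
  by_contra! h
  exact hs <| (ht.biUnion h).mono fun a ha =>
    mem_biUnion (hf ha) (show a ∈ {a' ∈ s | f a' = f a} from ⟨ha, rfl⟩)

theorem Set.countable_setOf_finset_subset {α : Type*} {C : Set α} (hC : C.Countable) :
    {s : Finset α | ↑s ⊆ C}.Countable := by
  refine ((countable_ofPred_finite_subset hC).preimage Finset.coe_injective).mono fun s hs => ?_
  exact ⟨s.finite_toSet, hs⟩

theorem Set.exists_pair_notMem_of_finite {ι : Type*} {S : Set ι} (hS : ¬ S.Countable)
    (F : ι → Set ι) (hF : ∀ a ∈ S, (F a).Finite) :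
    ∃ a ∈ S, ∃ b ∈ S, a ≠ b ∧ a ∉ F b ∧ b ∉ F a := by
  let e := (Infinite.natEmbedding S fun h => hS h.countable).trans (Function.Embedding.subtype _)
  have hCS : range e ⊆ S := range_subset_iff.2 fun n => (Infinite.natEmbedding S _ n).2
  have hU : (range e ∪ ⋃ c ∈ range e, F c).Countable :=
    (countable_range e).union ((countable_range e).biUnion fun c hc => (hF c (hCS hc)).countable)
  obtain ⟨b, hbS, hbU⟩ := not_subset.1 fun h => hS (hU.mono h)
  obtain ⟨a, haC, haF⟩ := ((infinite_range_of_injective e.injective).sdiff (hF b hbS)).nonempty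
  exact ⟨a, hCS haC, b, hbS, fun hab => hbU (.inl (hab ▸ haC)), haF,
    fun h => hbU (.inr (mem_biUnion haC h))⟩

section DeltaSystem
variable {ι α : Type*}

def IsDeltaSystem (S : Set ι) (g : ι → Finset α) (R : Finset α) : Prop :=
  ∀ a ∈ S, ∀ b ∈ S, a ≠ b → g a ∩ g b = R

theorem exists_pairwiseDisjoint_of_countable_fibers (g : ι → Finset α) {S : Set ι}
    (hS : ¬ S.Countable) (hfib : ∀ x, {a ∈ S | x ∈ g a}.Countable) :
    ∃ S' ⊆ S, ¬ S'.Countable ∧ S'.PairwiseDisjoint g := by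
  obtain ⟨M, hM⟩ := zorn_subset {Y | Y ⊆ S ∧ Y.PairwiseDisjoint g} fun c hc hchain =>
    ⟨⋃₀ c, ⟨sUnion_subset fun Y hY => (hc hY).1,
      (hchain.pairwiseDisjoint_sUnion g).2 fun Y hY => (hc hY).2⟩, fun _ => subset_sUnion_of_mem⟩
  refine ⟨M, hM.prop.1, fun hMc => ?_, hM.prop.2⟩
  have hBad : (M ∪ ⋃ a ∈ M, ⋃ x ∈ g a, {b ∈ S | x ∈ g b}).Countable :=
    hMc.union <| hMc.biUnion fun a _ => (g a).countable_toSet.biUnion fun x _ => hfib x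
  obtain ⟨b, hbS, hbBad⟩ := not_subset.1 fun h => hS (hBad.mono h)
  have hins : insert b M ∈ {Y | Y ⊆ S ∧ Y.PairwiseDisjoint g} :=
    ⟨insert_subset hbS hM.prop.1, hM.prop.2.insert fun a ha _ => Finset.disjoint_left.2
      fun x hxb hxa => hbBad (.inr (mem_biUnion ha (mem_biUnion hxa ⟨hbS, hxb⟩)))⟩
  exact hbBad (.inl (hM.eq_of_le hins (subset_insert b M) ▸ mem_insert b M))

theorem exists_deltaSystem_of_card_eq (n : ℕ) (g : ι → Finset α) {S : Set ι}
    (hS : ¬ S.Countable) (hcard : ∀ a ∈ S, (g a).card = n) :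
    ∃ R, ∃ S' ⊆ S, ¬ S'.Countable ∧ IsDeltaSystem S' g R := by
  induction n generalizing g S with
  | zero =>
    refine ⟨∅, S, subset_rfl, hS, fun a ha _ _ _ => ?_⟩
    rw [Finset.card_eq_zero.1 (hcard a ha), Finset.empty_inter]
  | succ n ih =>
    by_cases hx : ∃ x, ¬ {a ∈ S | x ∈ g a}.Countable
    · obtain ⟨x, hx⟩ := hx
      obtain ⟨R, S', hS'S, hS', hR⟩ := ih (fun a => (g a).erase x) hx
        fun a ha => by rw [Finset.card_erase_of_mem ha.2, hcard a ha.1]; rfl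
      refine ⟨insert x R, S', hS'S.trans (sep_subset _ _), hS', fun a ha b hb hab => ?_⟩
      have hxa : x ∈ g a := (hS'S ha).2
      have hxb : x ∈ g b := (hS'S hb).2
      rw [← hR a ha b hb hab]
      ext y
      by_cases hy : y = x <;> simp [hy, hxa, hxb]
    · simp only [not_exists, not_not] at hx
      obtain ⟨S', hS'S, hS', hdisj⟩ := exists_pairwiseDisjoint_of_countable_fibers g hS hx
      exact ⟨∅, S', hS'S, hS', fun a ha b hb hab =>
        Finset.disjoint_iff_inter_eq_empty.1 (hdisj ha hb hab)⟩

theorem exists_deltaSystem (g : ι → Finset α) {S : Set ι} (hS : ¬ S.Countable) :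
    ∃ R, ∃ S' ⊆ S, ¬ S'.Countable ∧ IsDeltaSystem S' g R := by
  obtain ⟨n, -, hSn⟩ := exists_not_countable_fiber (fun a => (g a).card) hS countable_univ
    (mapsTo_univ _ _)
  obtain ⟨R, S', hS'S, hS', hR⟩ := exists_deltaSystem_of_card_eq n g hSn fun a ha => ha.2
  exact ⟨R, S', hS'S.trans (sep_subset _ _), hS', hR⟩

end DeltaSystem

theorem Ordinal.countable_Iic_of_lt_omega1 {γ : Ordinal.{u}} (hγ : γ < omega1.{u}) :
    (Iic γ).Countable := by
  rw [← Iio_insert, countable_insert, ← le_aleph0_iff_set_countable, Cardinal.mk_Iio_ordinal,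
    lift_le_aleph0, ← lt_aleph_one_iff, ← lt_ord]
  exact hγ

section Tree

variable {T : Type u} [PartialOrder T]

theorem IsTree.le_total_of_le (hT : IsTree T) {x y r : T} (hx : x ≤ r) (hy : y ≤ r) :
    x ≤ y ∨ y ≤ x := by
  rcases hx.eq_or_lt with rfl | hx
  · exact Or.inr hy
  rcases hy.eq_or_lt with rfl | hy
  · exact Or.inl hx.le
  have := hT r
  rcases trichotomous (r := fun a b : {z // z < r} => (a : T) < b) ⟨x, hx⟩ ⟨y, hy⟩ with h | h | h
  · exact Or.inl h.le
  · exact Or.inl (congrArg Subtype.val h).le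
  · exact Or.inr h.le

theorem IsTree.wellFoundedLT (hT : IsTree T) : WellFoundedLT T := by
  refine ⟨⟨fun x => ⟨x, fun y hy => ?_⟩⟩⟩
  have acc_pred (z : {y // y < x}) : Acc (· < ·) (z : T) :=
    (hT x).wf.induction (C := fun z => Acc (· < ·) (z : T)) z
      fun z ih => ⟨_, fun w hw => ih ⟨w, hw.trans z.2⟩ hw⟩
  exact acc_pred ⟨y, hy⟩

variable (hLev : ∀ α : Ordinal.{u}, {x : T | treeHeight x = α}.Countable)
  (hHt : ∀ x : T, treeHeight x < omega1.{u})
include hLev hHt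

theorem mk_le_aleph_one_of_countable_levels : #T ≤ ℵ₁ := by
  let f : T → omega1.{u}.ToType := fun x => Ordinal.ToType.mk ⟨treeHeight x, hHt x⟩
  have hfib : ∀ b, #(f ⁻¹' {b}) ≤ ℵ₀ := fun b => by
    obtain ⟨⟨α, -⟩, rfl⟩ := Ordinal.ToType.mk.surjective b
    refine mk_le_aleph0_iff.mpr (Set.Countable.mono (fun x hx => ?_) (hLev α)).to_subtype
    exact congrArg Subtype.val (by simpa [f] using hx)
  calc #T ≤ #omega1.{u}.ToType * ℵ₀ := mk_le_mk_mul_of_mk_preimage_le f hfib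
    _ = ℵ₁ := by rw [mk_toType, omega1, card_ord, mul_aleph0_eq (aleph0_le_aleph 1)]

theorem countable_iff_exists_treeHeight_le {C : Set T} :
    C.Countable ↔ ∃ γ < omega1.{u}, ∀ x ∈ C, treeHeight x ≤ γ := by
  have homega : omega1.{u} = ω₁ := ord_aleph 1
  constructor
  · intro hC
    have := hC.to_subtype
    refine ⟨⨆ x : C, treeHeight (x : T), ?_, fun x hx => ?_⟩
    · rw [homega]
      exact Ordinal.iSup_lt_omega_one fun x => homega ▸ hHt x
    · exact le_ciSup Ordinal.bddAbove_of_small (⟨x, hx⟩ : C)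
  · rintro ⟨γ, hγ, hC⟩
    exact ((Ordinal.countable_Iic_of_lt_omega1 hγ).biUnion fun α _ => hLev α).mono
      fun x hx => mem_biUnion (hC x hx) rfl

end Tree

def CountableChainCondition (P : Type*) [PartialOrder P] : Prop :=
  ∀ A : Set P, A.Pairwise (fun p q => ¬ ∃ r, p ≤ r ∧ q ≤ r) → A.Countable

theorem MAomega1.exists_directed_meets (hMA : MAomega1.{u}) {P ι : Type u} [PartialOrder P]
    [Nonempty P] (hP : CountableChainCondition P) (hι : #ι ≤ ℵ₁) (D : ι → Set P)
    (hD : ∀ i p, ∃ q ∈ D i, p ≤ q) :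
    ∃ G : Set P, (∀ p ∈ G, ∀ q ∈ G, ∃ r ∈ G, p ≤ r ∧ q ≤ r) ∧ ∀ i, (G ∩ D i).Nonempty := by
  obtain ⟨G, hdir, -, hmeet⟩ :=
    hMA P ‹_› hP (range D) (mk_range_le.trans hι) (forall_mem_range.2 hD)
  exact ⟨G, hdir, fun i => hmeet _ (mem_range_self i)⟩

section Aronszajn
variable {T : Type u} [PartialOrder T]

theorem IsAronszajn.exists_antichain_of_forall_not_countable (hMA : MAomega1.{u})
    (hT : IsAronszajn T) {E : Set T} (hne : E.Nonempty)
    (hE : ∀ x ∈ E, ¬ {y ∈ E | x ≤ y}.Countable) :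
    ∃ A ⊆ E, ¬ A.Countable ∧ IsAntichain (· ≤ ·) A := by
  obtain ⟨hTree, ⟨-, hHt⟩, hLev, hChain⟩ := hT
  have hbdd (C : Set T) := countable_iff_exists_treeHeight_le hLev hHt (C := C)
  by_contra! hnot
  have hccc : CountableChainCondition E := fun A hA => by
    by_contra hAc
    refine hnot _ (image_subset_iff.2 fun (p : E) _ => p.2)
      (fun h => hAc (countable_of_injective_of_countable_image Subtype.val_injective.injOn h)) ?_
    rintro _ ⟨p, hp, rfl⟩ _ ⟨q, hq, rfl⟩ hpq hle
    exact hA hp hq (ne_of_apply_ne _ hpq) ⟨q, hle, le_rfl⟩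
  have := hne.to_subtype
  obtain ⟨G, hdir, hmeet⟩ := hMA.exists_directed_meets hccc
    (mk_le_aleph_one_of_countable_levels hLev hHt)
    (fun x : T => {y : E | treeHeight x < treeHeight (y : T)}) fun x p => by
      obtain ⟨y, hy, hxy⟩ : ∃ y ∈ {y ∈ E | (p : T) ≤ y}, treeHeight x < treeHeight y := by
        by_contra! h
        exact hE p p.2 ((hbdd _).2 ⟨_, hHt x, h⟩)
      exact ⟨⟨y, hy.1⟩, hxy, hy.2⟩
  have hGchain : IsChain (· < ·) (Subtype.val '' G) := by
    rintro _ ⟨p, hp, rfl⟩ _ ⟨q, hq, rfl⟩ hpq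
    obtain ⟨r, -, hpr, hqr⟩ := hdir p hp q hq
    exact (hTree.le_total_of_le hpr hqr).imp (·.lt_of_ne hpq) (·.lt_of_ne hpq.symm)
  obtain ⟨γ, hγ, hGγ⟩ := (hbdd _).1 (hChain _ hGchain)
  obtain ⟨x, hxE, hxγ⟩ : ∃ x ∈ E, γ < treeHeight x := by
    by_contra! h
    obtain ⟨y, hy⟩ := hne
    exact hE y hy ((hbdd _).2 ⟨γ, hγ, fun z hz => h z hz.1⟩)
  obtain ⟨g, hgG, hgx⟩ := hmeet x
  exact (hGγ _ (mem_image_of_mem _ hgG)).not_gt (hxγ.trans hgx)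

theorem IsAronszajn.exists_antichain_subset (hMA : MAomega1.{u}) (hT : IsAronszajn T)
    {E : Set T} (hE : ¬ E.Countable) : ∃ A ⊆ E, ¬ A.Countable ∧ IsAntichain (· ≤ ·) A := by
  set E' := {x ∈ E | ¬ {y ∈ E | x ≤ y}.Countable}
  have := hT.1.wellFoundedLT
  by_cases hM : {x | Minimal (· ∈ E \ E') x}.Countable
  swap
  · exact ⟨_, fun x hx => hx.prop.1, hM, setOfPred_minimal_antichain _⟩
  have hW : (E \ E').Countable := by
    have hcover : E \ E' ⊆ ⋃ m ∈ {x | Minimal (· ∈ E \ E') x}, {y ∈ E | m ≤ y} := fun x hx => by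
      obtain ⟨m, hmx, hm⟩ := exists_minimal_le_of_wellFoundedLT _ x hx
      exact mem_biUnion hm ⟨hx.1, hmx⟩
    refine (hM.biUnion fun m hm => ?_).mono hcover
    by_contra h
    exact hm.prop.2 ⟨hm.prop.1, h⟩
  have hsucc : ∀ x ∈ E', ¬ {y ∈ E' | x ≤ y}.Countable := fun x hx h =>
    hx.2 <| (h.union hW).mono fun y hy =>
      if hy' : y ∈ E' then .inl ⟨hy', hy.2⟩ else .inr ⟨hy.1, hy'⟩
  have hne : E'.Nonempty := nonempty_iff_ne_empty.2 fun h => hE (by simpa [h] using hW)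
  obtain ⟨A, hAE', hA⟩ := hT.exists_antichain_of_forall_not_countable hMA hne hsucc
  exact ⟨A, hAE'.trans (sep_subset _ _), hA⟩

theorem IsAronszajn.exists_subfamily_finite_below (hMA : MAomega1.{u}) (hT : IsAronszajn T)
    {ι : Type*} (n : ℕ) (g : ι → Finset T) {S : Set ι} (hS : ¬ S.Countable)
    (hdisj : S.PairwiseDisjoint g) (hcard : ∀ a ∈ S, (g a).card = n) :
    ∃ S' ⊆ S, ¬ S'.Countable ∧ ∀ x, {b ∈ S' | ∃ y ∈ g b, y < x}.Finite := by
  induction n generalizing g S with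
  | zero =>
    refine ⟨S, subset_rfl, hS, fun x => finite_empty.subset fun b ⟨hb, y, hy, _⟩ => ?_⟩
    simp [Finset.card_eq_zero.1 (hcard b hb)] at hy
  | succ n ih =>
    have hpick : ∀ a ∈ S, ∃ z, z ∈ g a := fun a ha =>
      Finset.card_pos.1 (by rw [hcard a ha]; omega)
    obtain ⟨a₀, ha₀⟩ := Set.Infinite.nonempty fun hf => hS hf.countable
    have : Nonempty T := ⟨(hpick a₀ ha₀).choose⟩
    choose! h hh using hpick
    have hinj : InjOn h S := fun a ha b hb hab =>
      hdisj.elim_finset ha hb _ (hh a ha) (hab ▸ hh b hb)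
    obtain ⟨A, hAS, hAc, hA⟩ := hT.exists_antichain_subset hMA
      fun hc => hS (countable_of_injective_of_countable_image hinj hc)
    set S₁ := {a ∈ S | h a ∈ A}
    have hS₁ : ¬ S₁.Countable := fun hc => hAc <| (hc.image h).mono fun z hz => by
      obtain ⟨a, ha, rfl⟩ := hAS hz
      exact ⟨a, ⟨ha, hz⟩, rfl⟩
    obtain ⟨S', hS'S₁, hS', hfin⟩ := ih (fun a => (g a).erase (h a)) hS₁
      ((hdisj.subset (sep_subset _ _)).mono_on fun a _ => Finset.erase_subset _ _)
      fun a ha => by rw [Finset.card_erase_of_mem (hh a ha.1), hcard a ha.1]; rfl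
    refine ⟨S', hS'S₁.trans (sep_subset _ _), hS', fun x => ?_⟩
    have hsub : {b ∈ S₁ | h b < x}.Subsingleton := fun b hb c hc => by
      have hbc : h b = h c := (hT.1.le_total_of_le hb.2.le hc.2.le).elim
        (hA.eq hb.1.2 hc.1.2) (hA.eq' hb.1.2 hc.1.2)
      exact hinj hb.1.1 hc.1.1 hbc
    refine ((hfin x).union hsub.finite).subset fun b ⟨hb, y, hy, hyx⟩ => ?_
    by_cases hyb : y = h b
    · exact .inr ⟨hS'S₁ hb, hyb ▸ hyx⟩
    · exact .inl ⟨hb, y, Finset.mem_erase.2 ⟨hyb, hy⟩, hyx⟩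

theorem IsAronszajn.exists_pair_incomparable (hMA : MAomega1.{u}) (hT : IsAronszajn T)
    {ι : Type*} (g : ι → Finset T) {S : Set ι} (hS : ¬ S.Countable)
    (hdisj : S.PairwiseDisjoint g) :
    ∃ a ∈ S, ∃ b ∈ S, a ≠ b ∧ ∀ x ∈ g a, ∀ y ∈ g b, ¬ x < y ∧ ¬ y < x := by
  obtain ⟨n, -, hSn⟩ := exists_not_countable_fiber (fun a => (g a).card) hS countable_univ
    (mapsTo_univ _ _)
  obtain ⟨S', hS'S, hS', hfin⟩ := hT.exists_subfamily_finite_below hMA n g hSn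
    (hdisj.subset (sep_subset _ _)) fun a ha => ha.2
  let F a := ⋃ x ∈ g a, {b ∈ S' | ∃ y ∈ g b, y < x}
  obtain ⟨a, ha, b, hb, hab, haF, hbF⟩ := exists_pair_notMem_of_finite hS' F
    fun a _ => (g a).finite_toSet.biUnion fun x _ => hfin x
  refine ⟨a, (hS'S ha).1, b, (hS'S hb).1, hab, fun x hx y hy => ⟨fun hxy => ?_, fun hyx => ?_⟩⟩
  · exact haF (mem_biUnion hy ⟨ha, x, hx, hxy⟩)
  · exact hbF (mem_biUnion hx ⟨hb, y, hy, hyx⟩)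

end Aronszajn

section Specialization
variable {T : Type u} [PartialOrder T]

def IsSpecializingPair (z w : T × ℕ) : Prop :=
  (z.1 = w.1 → z.2 = w.2) ∧ (z.1 < w.1 → z.2 ≠ w.2)

-- The graph of a finite partial map `T → ℕ` that is injective on chains.
def IsPartialSpecialization (s : Finset (T × ℕ)) : Prop :=
  ∀ z ∈ s, ∀ w ∈ s, IsSpecializingPair z w

abbrev SpecializingPoset (T : Type u) [PartialOrder T] : Type u :=
  {s : Finset (T × ℕ) // IsPartialSpecialization s}

theorem IsPartialSpecialization.insert {s : Finset (T × ℕ)} (hs : IsPartialSpecialization s)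
    {x : T} (hx : ∀ z ∈ s, z.1 ≠ x) {m : ℕ} (hm : ∀ z ∈ s, z.2 ≠ m) :
    IsPartialSpecialization (insert (x, m) s) := by
  intro z hz w hw
  rcases Finset.mem_insert.1 hz with rfl | hz <;> rcases Finset.mem_insert.1 hw with rfl | hw
  · exact ⟨fun _ => rfl, fun h => absurd h (lt_irrefl _)⟩
  · exact ⟨fun h => absurd h.symm (hx w hw), fun _ => (hm w hw).symm⟩
  · exact ⟨fun h => absurd h (hx z hz), fun _ => hm z hz⟩
  · exact hs z hz w hw

theorem SpecializingPoset.exists_le_mem (x : T) (p : SpecializingPoset T) :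
    ∃ q : SpecializingPoset T, (∃ m, (x, m) ∈ q.1) ∧ p ≤ q := by
  by_cases hx : ∃ m, (x, m) ∈ p.1
  · exact ⟨p, hx, le_rfl⟩
  obtain ⟨m, hm⟩ := Infinite.exists_notMem_finset (p.1.image Prod.snd)
  refine ⟨⟨insert (x, m) p.1, p.2.insert (fun z hz hzx => hx ⟨z.2, by rw [← hzx]; exact hz⟩)
    fun z hz hzm => hm (hzm ▸ Finset.mem_image_of_mem _ hz)⟩, ⟨m, Finset.mem_insert_self _ _⟩,
    Finset.subset_insert _ _⟩

theorem IsPartialSpecialization.isSpecializingPair_of_mem_of_mem {s t : Finset (T × ℕ)}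
    (hs : IsPartialSpecialization s) (ht : IsPartialSpecialization t) {R : Finset T}
    (hR : s.image Prod.fst ∩ t.image Prod.fst ⊆ R)
    (hagree : s.filter (·.1 ∈ R) = t.filter (·.1 ∈ R))
    (hinc : ∀ x ∈ s.image Prod.fst \ R, ∀ y ∈ t.image Prod.fst \ R, ¬ x < y)
    {z w : T × ℕ} (hz : z ∈ s) (hw : w ∈ t) : IsSpecializingPair z w := by
  have hzt : z.1 ∈ R → z ∈ t := fun hzR =>
    (Finset.mem_filter.1 (hagree ▸ Finset.mem_filter.2 ⟨hz, hzR⟩)).1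
  have hws : w.1 ∈ R → w ∈ s := fun hwR =>
    (Finset.mem_filter.1 (hagree.symm ▸ Finset.mem_filter.2 ⟨hw, hwR⟩)).1
  refine ⟨fun h => (ht z (hzt ?_) w hw).1 h, fun hlt => ?_⟩
  · exact hR (Finset.mem_inter.2 ⟨Finset.mem_image_of_mem _ hz, h ▸ Finset.mem_image_of_mem _ hw⟩)
  by_cases hzR : z.1 ∈ R
  · exact (ht z (hzt hzR) w hw).2 hlt
  by_cases hwR : w.1 ∈ R
  · exact (hs z hz w (hws hwR)).2 hlt
  exact absurd hlt (hinc _ (Finset.mem_sdiff.2 ⟨Finset.mem_image_of_mem _ hz, hzR⟩)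
    _ (Finset.mem_sdiff.2 ⟨Finset.mem_image_of_mem _ hw, hwR⟩))

theorem IsPartialSpecialization.union {s t : Finset (T × ℕ)}
    (hs : IsPartialSpecialization s) (ht : IsPartialSpecialization t) {R : Finset T}
    (hR : s.image Prod.fst ∩ t.image Prod.fst ⊆ R)
    (hagree : s.filter (·.1 ∈ R) = t.filter (·.1 ∈ R))
    (hinc : ∀ x ∈ s.image Prod.fst \ R, ∀ y ∈ t.image Prod.fst \ R, ¬ x < y ∧ ¬ y < x) :
    IsPartialSpecialization (s ∪ t) := by
  intro z hz w hw
  rcases Finset.mem_union.1 hz with hz | hz <;> rcases Finset.mem_union.1 hw with hw | hw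
  · exact hs z hz w hw
  · exact hs.isSpecializingPair_of_mem_of_mem ht hR hagree (fun x hx y hy => (hinc x hx y hy).1)
      hz hw
  · exact ht.isSpecializingPair_of_mem_of_mem hs (by rwa [Finset.inter_comm] at hR) hagree.symm
      (fun y hy x hx => (hinc x hx y hy).2) hz hw
  · exact ht z hz w hw

end Specialization

theorem IsAronszajn.countableChainCondition_specializingPoset {T : Type u} [PartialOrder T]
    (hMA : MAomega1.{u}) (hT : IsAronszajn T) :
    CountableChainCondition (SpecializingPoset T) := by
  intro A hA
  by_contra hAc
  let dom (p : SpecializingPoset T) : Finset T := p.1.image Prod.fst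
  obtain ⟨R, A₁, hA₁A, hA₁, hR⟩ := exists_deltaSystem dom hAc
  obtain ⟨r, -, hA₂⟩ := exists_not_countable_fiber
    (fun p : SpecializingPoset T => p.1.filter (·.1 ∈ R)) hA₁
    (countable_setOf_finset_subset (R.countable_toSet.prod countable_univ))
    fun p _ z hz => ⟨(Finset.mem_filter.1 hz).2, trivial⟩
  have hdisj : {p ∈ A₁ | p.1.filter (·.1 ∈ R) = r}.PairwiseDisjoint (fun p => dom p \ R) :=
    fun p hp q hq hpq => Finset.disjoint_left.2 fun x hxp hxq =>
      (Finset.mem_sdiff.1 hxp).2 <| hR p hp.1 q hq.1 hpq ▸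
        Finset.mem_inter.2 ⟨(Finset.mem_sdiff.1 hxp).1, (Finset.mem_sdiff.1 hxq).1⟩
  obtain ⟨p, hp, q, hq, hpq, hinc⟩ := hT.exists_pair_incomparable hMA _ hA₂ hdisj
  refine hA (hA₁A hp.1) (hA₁A hq.1) hpq
    ⟨⟨p.1 ∪ q.1, p.2.union q.2 (hR p hp.1 q hq.1 hpq).le (hp.2.trans hq.2.symm) hinc⟩,
      Finset.subset_union_left, Finset.subset_union_right⟩

/-- Under MA(ω₁), every Aronszajn tree is special. -/
theorem Aronszajn_special (hMA : MAomega1.{u}) :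
    ∀ (T : Type u) [PartialOrder T], IsAronszajn T → IsSpecialTree T := by
  intro T _ hT
  have : Nonempty (SpecializingPoset T) := ⟨⟨∅, fun z hz => absurd hz (Finset.notMem_empty z)⟩⟩
  obtain ⟨G, hdir, hmeet⟩ := hMA.exists_directed_meets
    (hT.countableChainCondition_specializingPoset hMA)
    (mk_le_aleph_one_of_countable_levels hT.2.2.1 hT.2.1.2)
    (fun x => {p : SpecializingPoset T | ∃ m, (x, m) ∈ p.1}) SpecializingPoset.exists_le_mem
  choose p hpG m hm using hmeet
  refine ⟨fun n => {x | m x = n}, fun n x hx y hy hxy hle => ?_, fun x => ⟨m x, rfl⟩⟩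
  obtain ⟨r, -, hxr, hyr⟩ := hdir _ (hpG x) _ (hpG y)
  exact (r.2 _ (hxr (hm x)) _ (hyr (hm y))).2 (hle.lt_of_ne hxy) (hx.trans hy.symm)
end

section
/- Let T₁ and T₂ be trees and suppose there exists a weak embedding f : T₁ → T₂. Then there exists a weak embedding g : T₁ → T₂ which preserves heights, i.e. ht(g(x)) = ht(x) for every x ∈ T₁. -/
universe u

open Cardinal Ordinal Set Classical

lemma treeHeight_def_aux {T : Type u} [PartialOrder T] {x : T}
    (h : IsWellOrder {y : T // y < x} (fun a b => (a : T) < (b : T))) :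
    treeHeight x = @Ordinal.type _ (fun a b : {y : T // y < x} => (a : T) < (b : T)) h := by
  rw [treeHeight]; exact dif_pos h

/-- In a tree, the height of a strict predecessor `z` of `x` equals the `typein`
of `z` in the well-order of predecessors of `x`. -/
lemma treeHeight_eq_typein_aux {T : Type u} [PartialOrder T] (hT : IsTree T) {x z : T}
    (hz : z < x) :
    treeHeight z =
      @Ordinal.typein {y : T // y < x} (fun a b => (a : T) < (b : T)) (hT x) ⟨z, hz⟩ := by
  haveI := hT x
  haveI := hT z
  rw [treeHeight_def_aux (hT z), ← Ordinal.type_subrel]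
  refine Ordinal.type_eq.2 ⟨⟨⟨fun w => ⟨⟨w.1, lt_trans w.2 hz⟩, w.2⟩,
    fun w => ⟨w.1.1, w.2⟩, fun w => rfl, fun w => rfl⟩, Iff.rfl⟩⟩

lemma treeHeight_lt_aux {T : Type u} [PartialOrder T] (hT : IsTree T) {x z : T}
    (hz : z < x) : treeHeight z < treeHeight x := by
  haveI := hT x
  rw [treeHeight_eq_typein_aux hT hz, treeHeight_def_aux (hT x)]
  exact Ordinal.typein_lt_type _ _

lemma treeHeight_le_of_weak_aux {T₁ T₂ : Type u} [PartialOrder T₁] [PartialOrder T₂]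
    (h₁ : IsTree T₁) (h₂ : IsTree T₂) (f : T₁ → T₂) (hf : IsWeakEmbedding f) (x : T₁) :
    treeHeight x ≤ treeHeight (f x) := by
  haveI := h₁ x
  haveI := h₂ (f x)
  rw [treeHeight_def_aux (h₁ x), treeHeight_def_aux (h₂ (f x))]
  exact Ordinal.type_le_iff'.2
    ⟨RelEmbedding.ofMonotone (fun z => ⟨f z.1, hf _ _ z.2⟩) fun a b hab => hf _ _ hab⟩

/-- If there is a weak embedding between two trees, then there is a
height-preserving one. -/
theorem exists_height_preserving_weak_embedding {T₁ T₂ : Type u}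
    [PartialOrder T₁] [PartialOrder T₂] (h₁ : IsTree T₁) (h₂ : IsTree T₂)
    (f : T₁ → T₂) (hf : IsWeakEmbedding f) :
    ∃ g : T₁ → T₂, IsWeakEmbedding g ∧ ∀ x : T₁, treeHeight (g x) = treeHeight x := by
  classical
  have key : ∀ x : T₁, ∃ z : T₂, z ≤ f x ∧ treeHeight z = treeHeight x := by
    intro x
    by_cases hx : treeHeight x = treeHeight (f x)
    · exact ⟨f x, le_rfl, hx.symm⟩
    · haveI := h₂ (f x)
      have hlt : treeHeight x < @Ordinal.type {y : T₂ // y < f x}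
          (fun a b => (a : T₂) < (b : T₂)) (h₂ (f x)) := by
        have := lt_of_le_of_ne (treeHeight_le_of_weak_aux h₁ h₂ f hf x) hx
        rwa [treeHeight_def_aux (h₂ (f x))] at this
      set z := Ordinal.enum (fun a b : {y : T₂ // y < f x} => (a : T₂) < (b : T₂))
        ⟨treeHeight x, hlt⟩ with hzdef
      refine ⟨z.1, le_of_lt z.2, ?_⟩
      rw [treeHeight_eq_typein_aux h₂ z.2]
      have := Ordinal.typein_enum (fun a b : {y : T₂ // y < f x} => (a : T₂) < (b : T₂)) hlt
      convert this using 2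
  choose g hgle hgh using key
  refine ⟨g, ?_, hgh⟩
  intro x y hxy
  have hfx : f x < f y := hf _ _ hxy
  have hgx : g x < f y := lt_of_le_of_lt (hgle x) hfx
  have hhlt : treeHeight (g x) < treeHeight (g y) := by
    rw [hgh x, hgh y]; exact treeHeight_lt_aux h₁ hxy
  rcases lt_or_eq_of_le (hgle y) with hgy | hgy
  · haveI := h₂ (f y)
    have h1 := treeHeight_eq_typein_aux h₂ hgx
    have h2 := treeHeight_eq_typein_aux h₂ hgy
    rw [h1, h2] at hhlt
    exact (@Ordinal.typein_lt_typein {w : T₂ // w < f y}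
      (fun a b => (a : T₂) < (b : T₂)) (h₂ (f y)) _ _).1 hhlt
  · rw [hgy]; exact hgx
end

section
/- Let T₁ and T₂ be trees of height ω₁ all of whose levels are countable, in which any two elements have a meet, and suppose there exists a specialising function for (T₁, T₂). Then T₁ and T₂ are both special; in particular both are Aronszajn trees. -/
universe u

open Cardinal Ordinal Set Classical

/-- A specialising function for a pair of trees with meets: a colouring of the pairs
`(x, y)` lying on equal limit levels such that equal colours force incomparability on
both sides and `ht (x₁ ⊓ x₂) > ht (y₁ ⊓ y₂)`. -/
def IsSpecialisingFunction {T₁ T₂ : Type u} [SemilatticeInf T₁] [SemilatticeInf T₂]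
    (c : T₁ → T₂ → ℕ) : Prop :=
  ∀ x₁ y₁ x₂ y₂,
    treeHeight x₁ = treeHeight y₁ → Order.IsSuccLimit (treeHeight x₁) →
    treeHeight x₂ = treeHeight y₂ → Order.IsSuccLimit (treeHeight x₂) →
    c x₁ y₁ = c x₂ y₂ → ¬ (x₁ = x₂ ∧ y₁ = y₂) →
      treeHeight x₁ ≠ treeHeight x₂ ∧
      (¬ x₁ ≤ x₂ ∧ ¬ x₂ ≤ x₁) ∧ (¬ y₁ ≤ y₂ ∧ ¬ y₂ ≤ y₁) ∧
      treeHeight ((y₁ : T₂) ⊓ y₂) < treeHeight ((x₁ : T₁) ⊓ x₂)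

/-! Choosing for every `x ∈ T₁` some `y x ∈ T₂` on the same level, `x ↦ c x (y x)` colours the
limit levels of `T₁` with countably many colours so that comparable elements get different
colours; symmetrically for `T₂`. Such a colouring extends to the whole tree: an element of height
`λ + n`, with `λ` a limit or `0`, gets the colour of its predecessor of height `λ` together with
`n`. The colour classes are then countably many antichains, and a chain meets each of them in at
most one point. -/

theorem Ordinal.toNat_card_injOn_Iio_omega0 :
    Set.InjOn (fun o : Ordinal => Cardinal.toNat o.card) (Set.Iio ω) := by
  rintro a ha b hb hab
  obtain ⟨m, rfl⟩ := Ordinal.lt_omega0.1 ha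
  obtain ⟨n, rfl⟩ := Ordinal.lt_omega0.1 hb
  simp only [Ordinal.card_nat, Cardinal.toNat_natCast] at hab
  rw [hab]

theorem Ordinal.mul_div_lt_mul_div_of_lt_of_mod_eq {a b c : Ordinal} (hc : c ≠ 0) (hab : a < b)
    (hmod : a % c = b % c) : c * (a / c) < c * (b / c) := by
  have hle : c * (a / c) ≤ c * (b / c) := by
    gcongr
    exact (Ordinal.mul_le_iff_le_div hc).1 ((Ordinal.mul_div_le a c).trans hab.le)
  refine hle.lt_of_ne fun heq => hab.ne ?_
  rw [← Ordinal.div_add_mod a c, ← Ordinal.div_add_mod b c, heq, hmod]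

theorem Ordinal.isSuccLimit_omega0_mul {a : Ordinal} (h : ω * a ≠ 0) :
    Order.IsSuccLimit (ω * a) :=
  Ordinal.isSuccLimit_mul_left Ordinal.isSuccLimit_omega0
    (pos_iff_ne_zero.2 (right_ne_zero_of_mul h))

section Tree

variable {T : Type u} [PartialOrder T]

theorem treeHeight_eq_type (hT : IsTree T) (x : T) :
    treeHeight x = @Ordinal.type _ (fun a b : {y : T // y < x} => (a : T) < (b : T)) (hT x) :=
  dif_pos (hT x)

theorem treeHeight_eq_typein (hT : IsTree T) {x : T} (y : {y : T // y < x}) :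
    treeHeight (y : T) =
      @Ordinal.typein _ (fun a b : {y : T // y < x} => (a : T) < (b : T)) (hT x) y := by
  have := hT x
  have := hT (y : T)
  rw [treeHeight_eq_type hT,
    ← @Ordinal.type_subrel _ (fun a b : {y : T // y < x} => (a : T) < (b : T)) (hT x) y]
  exact Ordinal.type_eq.2 ⟨RelIso.mk
    ⟨fun w => ⟨⟨w.1, w.2.trans y.2⟩, w.2⟩, fun w => ⟨w.1.1, w.2⟩, fun _ => rfl, fun _ => rfl⟩
    Iff.rfl⟩

theorem treeHeight_strictMono (hT : IsTree T) : StrictMono (treeHeight : T → Ordinal) := by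
  intro y x hyx
  have := hT x
  rw [show y = ((⟨y, hyx⟩ : {y : T // y < x}) : T) from rfl, treeHeight_eq_typein hT,
    treeHeight_eq_type hT x]
  exact Ordinal.typein_lt_type _ _

theorem exists_le_treeHeight_eq (hT : IsTree T) {x : T} {β : Ordinal} (hβ : β ≤ treeHeight x) :
    ∃ z ≤ x, treeHeight z = β := by
  rcases hβ.lt_or_eq with hβ | rfl
  · have := hT x
    rw [treeHeight_eq_type hT x] at hβ
    obtain ⟨z, hz⟩ := Ordinal.typein_surj _ hβ
    exact ⟨z, z.2.le, (treeHeight_eq_typein hT z).trans hz⟩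
  · exact ⟨x, le_rfl, rfl⟩

theorem lt_of_le_of_le_of_treeHeight_lt (hT : IsTree T) {x a b : T} (ha : a ≤ x) (hb : b ≤ x)
    (hab : treeHeight a < treeHeight b) : a < b := by
  have hmono := treeHeight_strictMono hT
  rcases hb.lt_or_eq with hb | rfl
  · rcases ha.lt_or_eq with ha | rfl
    · have := hT x
      rcases trichotomous_of (fun a b : {y : T // y < x} => (a : T) < b) ⟨a, ha⟩ ⟨b, hb⟩ with
        h | h | h
      · exact h
      · exact absurd hab (Subtype.mk.inj h ▸ lt_irrefl _)
      · exact absurd (hmono h) hab.not_gt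
    · exact absurd (hmono hb) hab.not_gt
  · exact ha.lt_of_ne fun h => hab.ne (congrArg treeHeight h)

theorem isSpecialTree_of_colouring {ι : Type*} [Countable ι] (f : T → ι)
    (hf : ∀ x y : T, x < y → f x ≠ f y) : IsSpecialTree T := by
  obtain ⟨g, hg⟩ := Countable.exists_injective_nat ι
  refine ⟨fun n => {x | g (f x) = n}, fun n x hx y hy hne hxy => ?_, fun x => ⟨_, rfl⟩⟩
  exact hf x y (hxy.lt_of_ne hne) (hg (hx.trans hy.symm))

theorem isSpecialTree_of_limit_colouring (hT : IsTree T) {ι : Type*} [Countable ι] (d : T → ι)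
    (hd : ∀ x y : T, Order.IsSuccLimit (treeHeight x) → Order.IsSuccLimit (treeHeight y) →
      x < y → d x ≠ d y) : IsSpecialTree T := by
  choose z hzx hz using fun x : T =>
    exists_le_treeHeight_eq hT (Ordinal.mul_div_le (treeHeight x) ω)
  refine isSpecialTree_of_colouring (fun x => ((if ω * (treeHeight x / ω) = 0 then none
    else some (d (z x))), Cardinal.toNat (treeHeight x % ω).card)) fun x y hxy hcol => ?_
  obtain ⟨hcol, hmod⟩ := Prod.mk.inj hcol
  have hlim := Ordinal.mul_div_lt_mul_div_of_lt_of_mod_eq Ordinal.omega0_ne_zero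
    (treeHeight_strictMono hT hxy) (Ordinal.toNat_card_injOn_Iio_omega0
      (Ordinal.mod_lt _ Ordinal.omega0_ne_zero) (Ordinal.mod_lt _ Ordinal.omega0_ne_zero) hmod)
  have hy0 : ω * (treeHeight y / ω) ≠ 0 := pos_iff_ne_zero.1 (zero_le.trans_lt hlim)
  have hx0 : ω * (treeHeight x / ω) ≠ 0 := by
    rintro hx0
    simp [hx0, hy0] at hcol
  simp only [hx0, hy0, if_false, Option.some_inj] at hcol
  refine hd (z x) (z y) ?_ ?_ ?_ hcol
  · exact (hz x).symm ▸ Ordinal.isSuccLimit_omega0_mul hx0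
  · exact (hz y).symm ▸ Ordinal.isSuccLimit_omega0_mul hy0
  · exact lt_of_le_of_le_of_treeHeight_lt hT ((hzx x).trans hxy.le) (hzx y)
      ((hz x).trans_lt (hlim.trans_eq (hz y).symm))

theorem IsSpecialTree.noUncountableChain (hS : IsSpecialTree T) : NoUncountableChain T := by
  obtain ⟨A, hA, hcover⟩ := hS
  intro C hC
  have hC_eq : C = ⋃ n, C ∩ A n := by
    ext x
    simpa using fun _ => hcover x
  rw [hC_eq]
  refine Set.countable_iUnion fun n => Set.Subsingleton.countable ?_
  rintro a ⟨haC, haA⟩ b ⟨hbC, hbA⟩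
  by_contra hne
  rcases hC haC hbC hne with h | h
  · exact hA n haA hbA hne h.le
  · exact hA n hbA haA (Ne.symm hne) h.le

end Tree

section Specialising

variable {T₁ T₂ : Type u} [SemilatticeInf T₁] [SemilatticeInf T₂] {c : T₁ → T₂ → ℕ}

theorem IsSpecialisingFunction.isSpecialTree_left (hc : IsSpecialisingFunction c)
    (h₁ : IsTree T₁) (hlev : ∀ x : T₁, ∃ y : T₂, treeHeight y = treeHeight x) :
    IsSpecialTree T₁ := by
  choose y hy using hlev
  refine isSpecialTree_of_limit_colouring h₁ (fun x => c x (y x)) fun x x' hx hx' hlt hcol => ?_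
  exact (hc x (y x) x' (y x') (hy x).symm hx (hy x').symm hx' hcol fun h => hlt.ne h.1).2.1.1
    hlt.le

theorem IsSpecialisingFunction.isSpecialTree_right (hc : IsSpecialisingFunction c)
    (h₂ : IsTree T₂) (hlev : ∀ y : T₂, ∃ x : T₁, treeHeight x = treeHeight y) :
    IsSpecialTree T₂ := by
  choose x hx using hlev
  refine isSpecialTree_of_limit_colouring h₂ (fun y => c (x y) y) fun y y' hy hy' hlt hcol => ?_
  exact (hc (x y) y (x y') y' (hx y) ((hx y).symm ▸ hy) (hx y') ((hx y').symm ▸ hy') hcol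
    fun h => hlt.ne h.2).2.2.1.1 hlt.le

end Specialising

/-- If `(T₁, T₂, c)` is a specialising triple of trees of height `ω₁` with countable
levels, then both trees are special, hence Aronszajn. -/
theorem specialising_triple_special {T₁ T₂ : Type u}
    [SemilatticeInf T₁] [SemilatticeInf T₂]
    (h₁ : IsTree T₁) (h₂ : IsTree T₂)
    (hh₁ : HasHeightOmega1 T₁) (hh₂ : HasHeightOmega1 T₂)
    (hl₁ : ∀ α : Ordinal.{u}, {x : T₁ | treeHeight x = α}.Countable)
    (hl₂ : ∀ α : Ordinal.{u}, {x : T₂ | treeHeight x = α}.Countable)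
    (c : T₁ → T₂ → ℕ) (hc : IsSpecialisingFunction c) :
    IsSpecialTree T₁ ∧ IsSpecialTree T₂ ∧ IsAronszajn T₁ ∧ IsAronszajn T₂ := by
  have hs₁ : IsSpecialTree T₁ := hc.isSpecialTree_left h₁ fun x => hh₂.1 _ (hh₁.2 x)
  have hs₂ : IsSpecialTree T₂ := hc.isSpecialTree_right h₂ fun y => hh₁.1 _ (hh₂.2 y)
  exact ⟨hs₁, hs₂, ⟨h₁, hh₁, hl₁, hs₁.noUncountableChain⟩, ⟨h₂, hh₂, hl₂, hs₂.noUncountableChain⟩⟩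
end

section
/- Let T₁ and T₂ be trees of height ω₁ in which any two elements have a meet, and suppose there exists a specialising function for (T₁, T₂). Then there is no weak embedding from T₁ into T₂. -/
universe u

open Cardinal Ordinal Set Classical

/-!
Suppose `f : T₁ → T₂` is a weak embedding. Heights can only grow along `f`, so for every limit
`β < ω₁` there are `x ∈ T₁` and `y ≤ f x` in `T₂`, both of height `β`. There are uncountably many
such `β` and only countably many colours, so two of these pairs `(x, y)`, `(x', y')` get the same
colour; then `y` and `y'` are incomparable, which forces `f (x ⊓ x') ≤ y ⊓ y'` and hence
`ht (x ⊓ x') ≤ ht (f (x ⊓ x')) ≤ ht (y ⊓ y')`, against the specialising condition.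
-/

namespace IsTree

variable {T : Type u} [PartialOrder T] (hT : IsTree T)
include hT

theorem treeHeight_eq_type (x : T) :
    treeHeight x = @Ordinal.type {y : T // y < x} (fun a b => (a : T) < (b : T)) (hT x) :=
  dif_pos (hT x)

theorem treeHeight_eq_typein {x y : T} (h : y < x) :
    treeHeight y =
      @Ordinal.typein {z : T // z < x} (fun a b => (a : T) < (b : T)) (hT x) ⟨y, h⟩ := by
  have := hT x
  have := hT y
  rw [hT.treeHeight_eq_type, ← Ordinal.type_subrel]
  exact Ordinal.type_eq.2 ⟨⟨⟨fun z => ⟨⟨z.1, z.2.trans h⟩, z.2⟩,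
    fun z => ⟨z.1.1, z.2⟩, fun _ => rfl, fun _ => rfl⟩, Iff.rfl⟩⟩

theorem treeHeight_lt_treeHeight {x y : T} (h : y < x) : treeHeight y < treeHeight x := by
  have := hT x
  rw [hT.treeHeight_eq_typein h, hT.treeHeight_eq_type x]
  exact Ordinal.typein_lt_type _ _

theorem treeHeight_le_treeHeight {x y : T} (h : y ≤ x) : treeHeight y ≤ treeHeight x := by
  rcases h.eq_or_lt with rfl | h
  · exact le_rfl
  · exact (hT.treeHeight_lt_treeHeight h).le

theorem exists_le_treeHeight_eq {x : T} {β : Ordinal.{u}} (h : β ≤ treeHeight x) :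
    ∃ y ≤ x, treeHeight y = β := by
  rcases h.eq_or_lt with rfl | h
  · exact ⟨x, le_rfl, rfl⟩
  have := hT x
  rw [hT.treeHeight_eq_type] at h
  obtain ⟨y, hy⟩ := Ordinal.typein_surj _ h
  exact ⟨y.1, y.2.le, (hT.treeHeight_eq_typein y.2).trans hy⟩

theorem le_total_of_le_s10 {x a b : T} (ha : a ≤ x) (hb : b ≤ x) : a ≤ b ∨ b ≤ a := by
  rcases ha.eq_or_lt with rfl | ha
  · exact Or.inr hb
  rcases hb.eq_or_lt with rfl | hb
  · exact Or.inl ha.le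
  have := hT x
  rcases @trichotomous _ (fun p q : {y : T // y < x} => (p : T) < (q : T)) _ ⟨a, ha⟩ ⟨b, hb⟩
    with h | h | h
  · exact Or.inl h.le
  · exact Or.inl (congrArg Subtype.val h).le
  · exact Or.inr h.le

end IsTree

namespace IsWeakEmbedding

variable {T₁ T₂ : Type u}

section PartialOrder

variable [PartialOrder T₁] [PartialOrder T₂] {f : T₁ → T₂} (hf : IsWeakEmbedding f)
include hf

theorem monotone : Monotone f := fun x y h => by
  rcases h.eq_or_lt with rfl | h
  · exact le_rfl
  · exact (hf x y h).le

theorem treeHeight_le (h₁ : IsTree T₁) (h₂ : IsTree T₂) (x : T₁) :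
    treeHeight x ≤ treeHeight (f x) := by
  have := h₁ x
  have := h₂ (f x)
  rw [h₁.treeHeight_eq_type, h₂.treeHeight_eq_type]
  exact (RelEmbedding.ofMonotone
    (fun y : {y : T₁ // y < x} => (⟨f y.1, hf _ _ y.2⟩ : {z : T₂ // z < f x}))
    (fun a b h => hf _ _ h)).ordinal_type_le

theorem exists_le_treeHeight_eq (h₁ : IsTree T₁) (h₂ : IsTree T₂) (x : T₁) :
    ∃ y ≤ f x, treeHeight y = treeHeight x :=
  h₂.exists_le_treeHeight_eq (hf.treeHeight_le h₁ h₂ x)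

/-- Below `f x` the tree `T₂` is a chain, so `f m` and `y` are comparable; and `y ≤ f m` would
make `y` a predecessor of `f x'`, hence comparable with `y'`. -/
theorem map_le_of_le_map_of_incomparable (h₂ : IsTree T₂) {x x' m : T₁} {y y' : T₂}
    (hy : y ≤ f x) (hy' : y' ≤ f x') (hyy' : ¬ y ≤ y') (hy'y : ¬ y' ≤ y)
    (hmx : m ≤ x) (hmx' : m ≤ x') : f m ≤ y := by
  refine (h₂.le_total_of_le_s10 (hf.monotone hmx) hy).resolve_right fun hym => ?_
  rcases h₂.le_total_of_le_s10 (hym.trans (hf.monotone hmx')) hy' with h | h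
  exacts [hyy' h, hy'y h]

end PartialOrder

theorem treeHeight_inf_le_treeHeight_inf [SemilatticeInf T₁] [SemilatticeInf T₂]
    {f : T₁ → T₂} (hf : IsWeakEmbedding f) (h₁ : IsTree T₁) (h₂ : IsTree T₂)
    {x x' : T₁} {y y' : T₂} (hy : y ≤ f x) (hy' : y' ≤ f x')
    (hyy' : ¬ y ≤ y') (hy'y : ¬ y' ≤ y) :
    treeHeight (x ⊓ x') ≤ treeHeight (y ⊓ y') :=
  calc treeHeight (x ⊓ x')
      ≤ treeHeight (f (x ⊓ x')) := hf.treeHeight_le h₁ h₂ _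
    _ ≤ treeHeight (y ⊓ y') := h₂.treeHeight_le_treeHeight <| le_inf
        (hf.map_le_of_le_map_of_incomparable h₂ hy hy' hyy' hy'y inf_le_left inf_le_right)
        (hf.map_le_of_le_map_of_incomparable h₂ hy' hy hy'y hyy' inf_le_right inf_le_left)

end IsWeakEmbedding

/-- If the limit ordinals below `ω₁` were countable, their supremum `σ` would be below `ω₁`,
and so would the limit ordinal `σ + ω`. -/
theorem uncountable_setOf_isSuccLimit_lt_omega1 :
    Uncountable {β : Ordinal.{u} | β < omega1.{u} ∧ Order.IsSuccLimit β} := by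
  set L := {β : Ordinal.{u} | β < omega1.{u} ∧ Order.IsSuccLimit β}
  rw [← not_countable_iff]
  intro hL
  have hω₁ : omega1.{u} = ω_ 1 := ord_aleph 1
  set σ := ⨆ β : L, β.1
  have hσ : σ < omega1 := hω₁ ▸ Ordinal.iSup_lt_omega_one fun β => hω₁ ▸ β.2.1
  have hmem : σ + ω ∈ L :=
    ⟨hω₁ ▸ isPrincipal_add_omega 1 (hω₁ ▸ hσ) omega0_lt_omega_one,
      isSuccLimit_add _ isSuccLimit_omega0⟩
  exact (Ordinal.le_iSup (fun β : L => β.1) ⟨_, hmem⟩).not_gt (lt_add_of_pos_right σ omega0_pos)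

theorem specialising_triple_no_weak_embedding_general {T₁ T₂ : Type u}
    [SemilatticeInf T₁] [SemilatticeInf T₂]
    (h₁ : IsTree T₁) (h₂ : IsTree T₂)
    (hh₁ : HasHeightOmega1 T₁)
    (c : T₁ → T₂ → ℕ) (hc : IsSpecialisingFunction c) :
    ¬ ∃ f : T₁ → T₂, IsWeakEmbedding f := by
  rintro ⟨f, hf⟩
  have hpair : ∀ β : {β : Ordinal.{u} | β < omega1.{u} ∧ Order.IsSuccLimit β},
      ∃ p : T₁ × T₂, treeHeight p.1 = β ∧ treeHeight p.2 = β ∧ p.2 ≤ f p.1 := fun β => by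
    obtain ⟨x, hx⟩ := hh₁.1 β β.2.1
    obtain ⟨y, hyx, hy⟩ := hf.exists_le_treeHeight_eq h₁ h₂ x
    exact ⟨(x, y), hx, hy.trans hx, hyx⟩
  choose p hp using hpair
  have := uncountable_setOf_isSuccLimit_lt_omega1.{u}
  obtain ⟨β, β', hcol, hne⟩ := Function.not_injective_iff.1 <|
    not_injective_uncountable_countable fun β => c (p β).1 (p β).2
  obtain ⟨hx, hy, hyf⟩ := hp β
  obtain ⟨hx', hy', hyf'⟩ := hp β'
  obtain ⟨-, -, ⟨hyy', hy'y⟩, hmeet⟩ :=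
    hc _ _ _ _ (hx.trans hy.symm) (hx ▸ β.2.2) (hx'.trans hy'.symm) (hx' ▸ β'.2.2) hcol
      fun h => hne (Subtype.ext (hx ▸ hx' ▸ congrArg treeHeight h.1))
  exact hmeet.not_ge (hf.treeHeight_inf_le_treeHeight_inf h₁ h₂ hyf hyf' hyy' hy'y)

/-- If `(T₁, T₂, c)` is a specialising triple of trees of height `ω₁`, then there is no
weak embedding of `T₁` into `T₂`. -/
theorem specialising_triple_no_weak_embedding {T₁ T₂ : Type u}
    [SemilatticeInf T₁] [SemilatticeInf T₂]
    (h₁ : IsTree T₁) (h₂ : IsTree T₂)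
    (hh₁ : HasHeightOmega1 T₁) (hh₂ : HasHeightOmega1 T₂)
    (c : T₁ → T₂ → ℕ) (hc : IsSpecialisingFunction c) :
    ¬ ∃ f : T₁ → T₂, IsWeakEmbedding f :=
  specialising_triple_no_weak_embedding_general h₁ h₂ hh₁ c hc
end

section
/- For every α < ω₁ the set 𝒟_α = {p ∈ Q(T) : uᵖ contains an element x with ht(x) = α} is dense in Q(T); that is, every condition of Q(T) has an extension belonging to 𝒟_α. -/
universe u

open Cardinal Ordinal Set Classical

/-- Nodes: the root `none` together with the ordinals below `ω₁`. -/
abbrev Node : Type := Option omega1.{0}.ToType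

/-- The ordinal below `ω₁` coded by an element of `omega1.toType`. -/
noncomputable def oVal (γ : omega1.{0}.ToType) : Ordinal.{0} :=
  ((Ordinal.ToType.mk (o := omega1.{0})).symm γ : Set.Iio omega1.{0})

/-- `ht γ`: the unique `α` with `ω·α ≤ γ < ω·α + ω`, i.e. `γ / ω`; the root gets `⊥`,
regarded as smaller than every ordinal. -/
noncomputable def nodeHt : Node → WithBot Ordinal.{0}
  | none => ⊥
  | some γ => (↑(oVal γ / Ordinal.omega0) : WithBot Ordinal.{0})

def pLe {X : Type*} (lt : X → X → Prop) (a b : X) : Prop := lt a b ∨ a = b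

/-- `m` is the meet (greatest common lower bound) of `x` and `y` inside `A`
with respect to the strict relation `lt`. -/
def IsMeetIn {X : Type*} (lt : X → X → Prop) (A : Set X) (x y m : X) : Prop :=
  m ∈ A ∧ pLe lt m x ∧ pLe lt m y ∧ ∀ z ∈ A, pLe lt z x → pLe lt z y → pLe lt z m

/-- `lt` is a strict partial order with field inside `A`. -/
def StrictOrderOn {X : Type*} (A : Set X) (lt : X → X → Prop) : Prop :=
  (∀ x y, lt x y → x ∈ A ∧ y ∈ A) ∧ (∀ x, ¬ lt x x) ∧
    ∀ x y z, lt x y → lt y z → lt x z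

/-- `lt` is a tree order on `A`: a strict partial order whose sets of strict
predecessors are well-ordered. -/
def TreeOrderOn {X : Type*} (A : Set X) (lt : X → X → Prop) : Prop :=
  StrictOrderOn A lt ∧
  (∀ x ∈ A, ∀ y z, lt y x → lt z x → lt y z ∨ lt z y ∨ y = z) ∧
  ∀ x ∈ A, Set.WellFoundedOn {y | lt y x} lt

/-- The height of `x`: the order type of its set of strict `lt`-predecessors. -/
noncomputable def relHeight {X : Type u} (lt : X → X → Prop) (x : X) : Ordinal.{u} :=
  if h : IsWellOrder {y : X // lt y x} (fun a b => lt a.1 b.1) then @Ordinal.type _ _ h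
  else 0

/-- `(A, lt)` is an Aronszajn tree: a tree of height `ω₁` with countable levels and no
uncountable chain. -/
def AronszajnOn {X : Type u} (A : Set X) (lt : X → X → Prop) : Prop :=
  TreeOrderOn A lt ∧
  (∀ α : Ordinal.{u}, α < omega1.{u} → ∃ x ∈ A, relHeight lt x = α) ∧
  (∀ x ∈ A, relHeight lt x < omega1.{u}) ∧
  (∀ α : Ordinal.{u}, {x ∈ A | relHeight lt x = α}.Countable) ∧
  ∀ C ⊆ A, (∀ x ∈ C, ∀ y ∈ C, x ≠ y → lt x y ∨ lt y x) → C.Countable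

/-- The ambient tree `T` of the forcing `Q(T)`: carrier `Tc ∋ none` (the root `r`),
strict order `ltT` with minimum the root, tree, heights of the nodes `γ ∈ S ⊆ ω₁`
equal to `γ / ω`, height `ω₁`, no uncountable chain, meets given by `meetT`. -/
def AmbientOK (Tc : Set Node) (ltT : Node → Node → Prop)
    (meetT : Node → Node → Node) : Prop :=
  none ∈ Tc ∧
  StrictOrderOn Tc ltT ∧
  (∀ x ∈ Tc, x ≠ none → ltT none x) ∧
  (∀ x ∈ Tc, ∀ y z, ltT y x → ltT z x → ltT y z ∨ ltT z y ∨ y = z) ∧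
  (∀ x ∈ Tc, Set.WellFoundedOn {y | ltT y x} ltT) ∧
  (∀ γ : omega1.{0}.ToType, some γ ∈ Tc →
      relHeight (fun a b => ltT a b ∧ a ≠ none) (some γ) = oVal γ / Ordinal.omega0) ∧
  (∀ α : Ordinal.{0}, α < omega1.{0} →
      ∃ γ : omega1.{0}.ToType, some γ ∈ Tc ∧ oVal γ / Ordinal.omega0 = α) ∧
  (∀ C ⊆ Tc, (∀ x ∈ C, ∀ y ∈ C, x ≠ y → ltT x y ∨ ltT y x) → C.Countable) ∧
  ∀ x ∈ Tc, ∀ y ∈ Tc, IsMeetIn ltT Tc x y (meetT x y)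

/-- A condition of the forcing `Q(T)`. -/
structure QCond : Type 1 where
  u : Finset Node
  v : Finset Node
  lt : Node → Node → Prop
  c : Node → Node → Option ℕ

/-- The requirements making `p` a condition of `Q(T)`. -/
structure QValid (Tc : Set Node) (ltT : Node → Node → Prop)
    (meetT : Node → Node → Node) (p : QCond) : Prop where
  root_u : none ∈ p.u
  root_v : none ∈ p.v
  v_sub : ∀ y ∈ p.v, y ∈ Tc
  v_ht : ∀ y ∈ p.v, ∃ x ∈ p.u, nodeHt x = nodeHt y
  lt_dom : ∀ x y : Node, p.lt x y → x ∈ p.u ∧ y ∈ p.u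
  lt_irrefl : ∀ x : Node, ¬ p.lt x x
  lt_trans : ∀ x y z : Node, p.lt x y → p.lt y z → p.lt x z
  lt_root : ∀ x ∈ p.u, x ≠ none → p.lt none x
  lt_ht : ∀ x y : Node, p.lt x y → nodeHt x < nodeHt y
  lt_pred_linear : ∀ x y z : Node, p.lt x z → p.lt y z → p.lt x y ∨ p.lt y x ∨ x = y
  lt_meet : ∀ x ∈ p.u, ∀ y ∈ p.u, ∃ m : Node, IsMeetIn p.lt ↑p.u x y m
  c_dom : ∀ x y : Node, p.c x y ≠ none ↔
    (x ∈ p.u ∧ y ∈ p.v ∧ nodeHt x = nodeHt y ∧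
      ∃ δ : Ordinal.{0}, Order.IsSuccLimit δ ∧ nodeHt x = (↑δ : WithBot Ordinal.{0}))
  c_spec : ∀ x₁ y₁ x₂ y₂ : Node, ∀ n : ℕ, p.c x₁ y₁ = some n → p.c x₂ y₂ = some n →
    ¬ (x₁ = x₂ ∧ y₁ = y₂) →
      nodeHt x₁ ≠ nodeHt x₂ ∧
      (¬ p.lt x₁ x₂ ∧ ¬ p.lt x₂ x₁ ∧ x₁ ≠ x₂) ∧
      (¬ ltT y₁ y₂ ∧ ¬ ltT y₂ y₁ ∧ y₁ ≠ y₂) ∧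
      ∀ m : Node, IsMeetIn p.lt ↑p.u x₁ x₂ m → nodeHt (meetT y₁ y₂) < nodeHt m

/-- The extension order of `Q(T)`. -/
def QLe (p q : QCond) : Prop :=
  p.u ⊆ q.u ∧ p.v ⊆ q.v ∧ (∀ x y : Node, p.lt x y → q.lt x y) ∧
  (∀ x y : Node, ∀ n : ℕ, p.c x y = some n → q.c x y = some n) ∧
  ∀ x ∈ p.u, ∀ y ∈ p.u, ∀ m : Node,
    IsMeetIn p.lt ↑p.u x y m → IsMeetIn q.lt ↑q.u x y m

/-!
A condition is extended to meet level `α` by adding one fresh node `X` of height `α` directly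
above the root. Only the root lies below `X`, so the meets of old nodes do not change and the meet
of `X` with any old node is the root. If `α` is a limit, the new pairs `(X, y)` with `y ∈ vᵖ` of
height `α` must be coloured; giving them pairwise distinct colours above all colours of `p`
makes the colour requirement vacuous for every pair of pairs that involves a new one.
-/

lemma omega0_mul_add_natCast_lt_omega1 {α : Ordinal.{0}} (hα : α < omega1.{0}) (n : ℕ) :
    ω * α + n < omega1.{0} := by
  have h₁ : ℵ₀ ≤ Cardinal.aleph 1 := aleph0_le_aleph 1
  have hω : ω < omega1.{0} := Cardinal.lt_ord.2 (by simp)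
  exact isPrincipal_add_ord h₁ (isPrincipal_mul_ord h₁ hω hα)
    ((Ordinal.natCast_lt_omega0 n).trans hω)

lemma infinite_setOf_nodeHt_eq {α : Ordinal.{0}} (hα : α < omega1.{0}) :
    {X : Node | nodeHt X = α}.Infinite := by
  let f : ℕ → Node := fun n =>
    some (Ordinal.ToType.mk ⟨ω * α + n, omega0_mul_add_natCast_lt_omega1 hα n⟩)
  have hf : Function.Injective f := by
    intro n m h
    have := congrArg Subtype.val ((Ordinal.ToType.mk).injective (Option.some_injective _ h))
    exact_mod_cast (add_right_inj _).1 this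
  refine Set.infinite_of_injective_forall_mem hf fun n => ?_
  simp only [Set.mem_ofPred_eq, f, nodeHt, oVal, OrderIso.symm_apply_apply]
  rw [Ordinal.mul_add_div _ Ordinal.omega0_ne_zero,
    Ordinal.div_eq_zero_of_lt (Ordinal.natCast_lt_omega0 n), add_zero]

lemma nodeHt_none_lt {X : Node} (hX : X ≠ none) : nodeHt none < nodeHt X := by
  obtain ⟨γ, rfl⟩ := Option.ne_none_iff_exists'.1 hX
  exact WithBot.bot_lt_coe _

section Meets

variable {β : Type*} {lt : β → β → Prop} {A : Set β} {x y m : β}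

lemma IsMeetIn.symm (h : IsMeetIn lt A x y m) : IsMeetIn lt A y x m :=
  ⟨h.1, h.2.2.1, h.2.1, fun z hz hzy hzx => h.2.2.2 z hz hzx hzy⟩

lemma isMeetIn_self (hx : x ∈ A) : IsMeetIn lt A x x x :=
  ⟨hx, Or.inr rfl, Or.inr rfl, fun _ _ h _ => h⟩

end Meets

namespace QCond

def colourBound (p : QCond) : ℕ :=
  (p.u ×ˢ p.v).sup (fun z => (p.c z.1 z.2).getD 0) + 1

noncomputable def addLeaf (p : QCond) (X : Node) : QCond where
  u := insert X p.u
  v := p.v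
  lt a b := p.lt a b ∨ (a = none ∧ b = X)
  c x y :=
    if h : x = X ∧ y ∈ p.v ∧ nodeHt x = nodeHt y ∧
        ∃ δ : Ordinal.{0}, Order.IsSuccLimit δ ∧ nodeHt x = (↑δ : WithBot Ordinal.{0}) then
      some (p.colourBound + p.v.equivFin ⟨y, h.2.1⟩)
    else p.c x y

variable {p : QCond} {X a b x y : Node}

lemma addLeaf_lt_iff_of_ne (hb : b ≠ X) : (p.addLeaf X).lt a b ↔ p.lt a b := by
  simp [addLeaf, hb]

lemma pLe_addLeaf_iff_of_ne (hb : b ≠ X) : pLe (p.addLeaf X).lt a b ↔ pLe p.lt a b := by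
  rw [pLe, pLe, addLeaf_lt_iff_of_ne hb]

lemma addLeaf_c_of_ne (hx : x ≠ X) : (p.addLeaf X).c x y = p.c x y := by
  simp [addLeaf, hx]

end QCond

open QCond

namespace QValid

variable {Tc : Set Node} {ltT : Node → Node → Prop} {meetT : Node → Node → Node}
  {p : QCond} {X a b x y m : Node} {n : ℕ}

lemma colour_lt_colourBound (hp : QValid Tc ltT meetT p) (h : p.c x y = some n) :
    n < p.colourBound := by
  have hxy := (hp.c_dom x y).1 (by simp [h])
  have := Finset.le_sup (f := fun z : Node × Node => (p.c z.1 z.2).getD 0)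
    (Finset.mk_mem_product hxy.1 hxy.2.1)
  simp only [h, Option.getD_some] at this
  exact Nat.lt_succ_of_le this

lemma not_lt_none (hp : QValid Tc ltT meetT p) : ¬ p.lt a none := fun h => by
  simpa [nodeHt] using hp.lt_ht a none h

lemma addLeaf_lt_leaf_iff (hp : QValid Tc ltT meetT p) (hX : X ∉ p.u) :
    (p.addLeaf X).lt a X ↔ a = none := by
  have : ¬ p.lt a X := fun h => hX (hp.lt_dom a X h).2
  simp [QCond.addLeaf, this]

lemma not_addLeaf_leaf_lt (hp : QValid Tc ltT meetT p) (hX : X ∉ p.u) (hXr : X ≠ none) :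
    ¬ (p.addLeaf X).lt X b := by
  rintro (h | ⟨rfl, -⟩)
  exacts [hX (hp.lt_dom X b h).1, hXr rfl]

lemma not_pLe_addLeaf_leaf (hp : QValid Tc ltT meetT p) (hX : X ∉ p.u) (hXr : X ≠ none)
    (hb : b ∈ p.u) : ¬ pLe (p.addLeaf X).lt X b := by
  rintro (h | rfl)
  exacts [hp.not_addLeaf_leaf_lt hX hXr h, hX hb]

lemma isMeetIn_addLeaf_iff (hp : QValid Tc ltT meetT p) (hX : X ∉ p.u) (hXr : X ≠ none)
    (hx : x ∈ p.u) (hy : y ∈ p.u) :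
    IsMeetIn (p.addLeaf X).lt ↑(p.addLeaf X).u x y m ↔ IsMeetIn p.lt ↑p.u x y m := by
  have hne : ∀ {b}, b ∈ p.u → b ≠ X := fun hb => ne_of_mem_of_not_mem hb hX
  have hmem : ∀ {z}, z ∈ (↑(p.addLeaf X).u : Set Node) ↔ z = X ∨ z ∈ p.u := Finset.mem_insert
  simp only [IsMeetIn, pLe_addLeaf_iff_of_ne (hne hx), pLe_addLeaf_iff_of_ne (hne hy)]
  constructor
  · rintro ⟨hm, hmx, hmy, hgreatest⟩
    have hmp : m ∈ p.u := (hmem.1 hm).resolve_left fun h =>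
      hp.not_pLe_addLeaf_leaf hX hXr hx (h ▸ (pLe_addLeaf_iff_of_ne (hne hx)).2 hmx)
    refine ⟨hmp, hmx, hmy, fun z hz hzx hzy => ?_⟩
    exact (pLe_addLeaf_iff_of_ne (hne hmp)).1 (hgreatest z (hmem.2 (Or.inr hz)) hzx hzy)
  · rintro ⟨hm, hmx, hmy, hgreatest⟩
    refine ⟨hmem.2 (Or.inr hm), hmx, hmy, fun z hz hzx hzy => ?_⟩
    rcases hmem.1 hz with rfl | hz
    · exact absurd ((pLe_addLeaf_iff_of_ne (hne hx)).2 hzx) (hp.not_pLe_addLeaf_leaf hX hXr hx)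
    · exact (pLe_addLeaf_iff_of_ne (hne hm)).2 (hgreatest z hz hzx hzy)

lemma isMeetIn_addLeaf_leaf (hp : QValid Tc ltT meetT p) (hX : X ∉ p.u) (hXr : X ≠ none)
    (hy : y ∈ p.u) : IsMeetIn (p.addLeaf X).lt ↑(p.addLeaf X).u X y none := by
  refine ⟨Finset.mem_insert_of_mem hp.root_u, Or.inl (Or.inr ⟨rfl, rfl⟩), ?_, ?_⟩
  · by_cases hyr : y = none
    exacts [Or.inr hyr.symm, Or.inl (Or.inl (hp.lt_root y hy hyr))]
  · rintro z - (hzX | rfl) hzy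
    exacts [Or.inr ((hp.addLeaf_lt_leaf_iff hX).1 hzX),
      absurd hzy (hp.not_pLe_addLeaf_leaf hX hXr hy)]

lemma addLeaf_c_eq_some (hp : QValid Tc ltT meetT p) (hX : X ∉ p.u)
    (h : (p.addLeaf X).c x y = some n) :
    (x ∈ p.u ∧ p.c x y = some n) ∨
      (x = X ∧ ∃ hy : y ∈ p.v, n = p.colourBound + p.v.equivFin ⟨y, hy⟩) := by
  by_cases hx : x = X
  · subst hx
    dsimp only [QCond.addLeaf] at h
    split_ifs at h with hnew
    · exact Or.inr ⟨rfl, hnew.2.1, (Option.some_injective _ h).symm⟩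
    · exact absurd ((hp.c_dom x y).1 (by simp [h])).1 hX
  · rw [addLeaf_c_of_ne hx] at h
    exact Or.inl ⟨((hp.c_dom x y).1 (by simp [h])).1, h⟩

lemma c_spec_addLeaf_of_mem (hp : QValid Tc ltT meetT p) (hX : X ∉ p.u) (hXr : X ≠ none)
    {x₁ y₁ x₂ y₂ : Node} (hx₁ : x₁ ∈ p.u) (hx₂ : x₂ ∈ p.u)
    (h₁ : p.c x₁ y₁ = some n) (h₂ : p.c x₂ y₂ = some n) (hne : ¬ (x₁ = x₂ ∧ y₁ = y₂)) :
    nodeHt x₁ ≠ nodeHt x₂ ∧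
      (¬ (p.addLeaf X).lt x₁ x₂ ∧ ¬ (p.addLeaf X).lt x₂ x₁ ∧ x₁ ≠ x₂) ∧
      (¬ ltT y₁ y₂ ∧ ¬ ltT y₂ y₁ ∧ y₁ ≠ y₂) ∧
      ∀ m : Node, IsMeetIn (p.addLeaf X).lt ↑(p.addLeaf X).u x₁ x₂ m →
        nodeHt (meetT y₁ y₂) < nodeHt m := by
  obtain ⟨hht, ⟨h₁₂, h₂₁, hx⟩, hy, hmeet⟩ := hp.c_spec x₁ y₁ x₂ y₂ n h₁ h₂ hne
  rw [addLeaf_lt_iff_of_ne (ne_of_mem_of_not_mem hx₂ hX),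
    addLeaf_lt_iff_of_ne (ne_of_mem_of_not_mem hx₁ hX)]
  exact ⟨hht, ⟨h₁₂, h₂₁, hx⟩, hy,
    fun m hm => hmeet m ((hp.isMeetIn_addLeaf_iff hX hXr hx₁ hx₂).1 hm)⟩

protected theorem addLeaf (hp : QValid Tc ltT meetT p) (hX : X ∉ p.u) (hXr : X ≠ none) :
    QValid Tc ltT meetT (p.addLeaf X) where
  root_u := Finset.mem_insert_of_mem hp.root_u
  root_v := hp.root_v
  v_sub := hp.v_sub
  v_ht y hy := by
    obtain ⟨x, hx, hxy⟩ := hp.v_ht y hy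
    exact ⟨x, Finset.mem_insert_of_mem hx, hxy⟩
  lt_dom := by
    rintro x y (h | ⟨rfl, rfl⟩)
    · exact ⟨Finset.mem_insert_of_mem (hp.lt_dom x y h).1,
        Finset.mem_insert_of_mem (hp.lt_dom x y h).2⟩
    · exact ⟨Finset.mem_insert_of_mem hp.root_u, Finset.mem_insert_self _ _⟩
  lt_irrefl := by
    rintro x (h | ⟨rfl, h⟩)
    exacts [hp.lt_irrefl x h, hXr h.symm]
  lt_trans := by
    rintro x y z (h₁ | ⟨-, hyX⟩) (h₂ | ⟨hy, -⟩)
    · exact Or.inl (hp.lt_trans x y z h₁ h₂)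
    · exact absurd (hy ▸ h₁) hp.not_lt_none
    · exact absurd (hyX ▸ (hp.lt_dom y z h₂).1) hX
    · exact absurd (hyX.symm.trans hy) hXr
  lt_root x hx hxr := by
    rcases Finset.mem_insert.1 hx with rfl | hx
    exacts [Or.inr ⟨rfl, rfl⟩, Or.inl (hp.lt_root x hx hxr)]
  lt_ht := by
    rintro x y (h | ⟨rfl, rfl⟩)
    exacts [hp.lt_ht x y h, nodeHt_none_lt hXr]
  lt_pred_linear x y z hx hy := by
    by_cases hz : z = X
    · subst hz
      rw [(hp.addLeaf_lt_leaf_iff hX).1 hx, (hp.addLeaf_lt_leaf_iff hX).1 hy]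
      exact Or.inr (Or.inr rfl)
    · rw [addLeaf_lt_iff_of_ne hz] at hx hy
      rcases hp.lt_pred_linear x y z hx hy with h | h | h
      exacts [Or.inl (Or.inl h), Or.inr (Or.inl (Or.inl h)), Or.inr (Or.inr h)]
  lt_meet x hx y hy := by
    rcases Finset.mem_insert.1 hx with hxX | hx <;> rcases Finset.mem_insert.1 hy with hyX | hy
    · exact ⟨X, by rw [hxX, hyX]; exact isMeetIn_self (Finset.mem_insert_self X p.u)⟩
    · exact ⟨none, by rw [hxX]; exact hp.isMeetIn_addLeaf_leaf hX hXr hy⟩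
    · exact ⟨none, by rw [hyX]; exact (hp.isMeetIn_addLeaf_leaf hX hXr hx).symm⟩
    · obtain ⟨m, hm⟩ := hp.lt_meet x hx y hy
      exact ⟨m, (hp.isMeetIn_addLeaf_iff hX hXr hx hy).2 hm⟩
  c_dom x y := by
    by_cases hx : x = X
    · subst hx
      dsimp only [QCond.addLeaf]
      simp only [Finset.mem_insert_self, true_and]
      split_ifs with hnew
      · exact iff_of_true (Option.some_ne_none _) hnew
      · exact iff_of_false (fun h => hX ((hp.c_dom x y).1 h).1) hnew
    · rw [addLeaf_c_of_ne hx, hp.c_dom]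
      simp only [QCond.addLeaf, Finset.mem_insert, hx, false_or]
  c_spec x₁ y₁ x₂ y₂ n h₁ h₂ hne := by
    rcases hp.addLeaf_c_eq_some hX h₁ with ⟨hx₁, h₁⟩ | ⟨hx₁, hy₁, hn₁⟩ <;>
      rcases hp.addLeaf_c_eq_some hX h₂ with ⟨hx₂, h₂⟩ | ⟨hx₂, hy₂, hn₂⟩
    · exact hp.c_spec_addLeaf_of_mem hX hXr hx₁ hx₂ h₁ h₂ hne
    · exact absurd (hp.colour_lt_colourBound h₁) (by omega)
    · exact absurd (hp.colour_lt_colourBound h₂) (by omega)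
    · have hidx := p.v.equivFin.injective
        (Fin.val_injective (Nat.add_left_cancel (hn₁.symm.trans hn₂)))
      exact absurd ⟨hx₁.trans hx₂.symm, congrArg Subtype.val hidx⟩ hne

theorem le_addLeaf (hp : QValid Tc ltT meetT p) (hX : X ∉ p.u) (hXr : X ≠ none) :
    QLe p (p.addLeaf X) := by
  refine ⟨Finset.subset_insert _ _, subset_rfl, fun x y h => Or.inl h, fun x y n h => ?_,
    fun x hx y hy m hm => (hp.isMeetIn_addLeaf_iff hX hXr hx hy).2 hm⟩
  have hx : x ∈ p.u := ((hp.c_dom x y).1 (by simp [h])).1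
  rwa [addLeaf_c_of_ne (ne_of_mem_of_not_mem hx hX)]

end QValid

theorem QCond_dense_level_general (Tc : Set Node) (ltT : Node → Node → Prop)
    (meetT : Node → Node → Node) (α : Ordinal.{0}) (hα : α < omega1.{0}) :
    ∀ p : QCond, QValid Tc ltT meetT p →
      ∃ q : QCond, QValid Tc ltT meetT q ∧ QLe p q ∧
        ∃ x ∈ q.u, nodeHt x = (↑α : WithBot Ordinal.{0}) := by
  intro p hp
  obtain ⟨X, hXα, hX⟩ := (infinite_setOf_nodeHt_eq hα).exists_notMem_finset p.u
  have hXr : X ≠ none := by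
    rintro rfl
    exact WithBot.bot_ne_coe hXα
  exact ⟨p.addLeaf X, hp.addLeaf hX hXr, hp.le_addLeaf hX hXr,
    X, Finset.mem_insert_self X p.u, hXα⟩

/-- For every `α < ω₁` the set of conditions whose first part contains an element of
height `α` is dense in `Q(T)`. -/
theorem QCond_dense_level (Tc : Set Node) (ltT : Node → Node → Prop)
    (meetT : Node → Node → Node) (hT : AmbientOK Tc ltT meetT)
    (α : Ordinal.{0}) (hα : α < omega1.{0}) :
    ∀ p : QCond, QValid Tc ltT meetT p →
      ∃ q : QCond, QValid Tc ltT meetT q ∧ QLe p q ∧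
        ∃ x ∈ q.u, nodeHt x = (↑α : WithBot Ordinal.{0}) :=
  QCond_dense_level_general Tc ltT meetT α hα
end

section
/- For every ρ ∈ T the set ℰ_ρ = {p ∈ P(T) : ρ ∈ uᵖ} is dense in P(T); that is, every condition of P(T) has an extension q with ρ ∈ u^q. -/
universe u

open Cardinal Ordinal Set Classical

/-- `ht γ`: the unique `α` with `ω·α ≤ γ < ω·α + ω`, i.e. `γ / ω`. -/
noncomputable def htOf (γ : omega1.{0}.ToType) : Ordinal.{0} := oVal γ / Ordinal.omega0

/-- Codes for the nodes of `T`: partial functions on `ω₁` with values in `ω₁`,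
representing functions `ρ : β → ω₁` for countable ordinals `β = lg ρ`. -/
abbrev Sseq : Type := omega1.{0}.ToType → Option omega1.{0}.ToType

/-- A code is a genuine sequence if its domain is a proper initial segment of `ω₁`. -/
def IsSeqOK (ρ : Sseq) : Prop :=
  (∀ ξ η : omega1.{0}.ToType, ξ < η → ρ η ≠ none → ρ ξ ≠ none) ∧ ∃ ξ, ρ ξ = none

/-- The length of a sequence: the least point where it is undefined. -/
noncomputable def lg (ρ : Sseq) : Ordinal.{0} := sInf (oVal '' {ξ | ρ ξ = none})

/-- The (non-strict) extension order on sequences. -/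
def seqLE (ρ τ : Sseq) : Prop := ∀ ξ a, ρ ξ = some a → τ ξ = some a

/-- The strict extension order on sequences. -/
def seqLT (ρ τ : Sseq) : Prop := seqLE ρ τ ∧ ρ ≠ τ

/-- `ρ ∩ τ`: the longest common initial segment of `ρ` and `τ`. -/
noncomputable def meetSeq (ρ τ : Sseq) : Sseq :=
  fun ξ => if ∀ η, η ≤ ξ → ρ η = τ η then ρ ξ else none

/-- The restriction of `ρ` to the initial segment below `b`. -/
noncomputable def restrictSeq (ρ : Sseq) (b : omega1.{0}.ToType) : Sseq :=
  fun ξ => if ξ < b then ρ ξ else none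

/-- The empty sequence. -/
def emptySeq : Sseq := fun _ => none

/-- The ambient tree `T` of the forcing `P(T)`: a set of sequences of countable length,
containing the empty sequence, closed under restrictions to initial segments, of
cardinality `ℵ₁`, ordered by strict extension, with no uncountable chain. -/
def PAmbientOK (Tc : Set Sseq) : Prop :=
  (∀ ρ ∈ Tc, IsSeqOK ρ) ∧
  emptySeq ∈ Tc ∧
  (∀ ρ ∈ Tc, ∀ b : omega1.{0}.ToType, restrictSeq ρ b ∈ Tc) ∧
  Cardinal.mk Tc = Cardinal.aleph.{0} 1 ∧
  ∀ C ⊆ Tc, (∀ ρ ∈ C, ∀ τ ∈ C, ρ ≠ τ → seqLE ρ τ ∨ seqLE τ ρ) → C.Countable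

/-- A condition of the forcing `P(T)`. -/
structure PCond : Type where
  u : Finset Sseq
  v : Finset omega1.{0}.ToType
  lt : omega1.{0}.ToType → omega1.{0}.ToType → Prop
  f : Sseq → Option omega1.{0}.ToType
  c : omega1.{0}.ToType → Option ℕ

/-- The requirements making `p` a condition of `P(T)`. -/
structure PValid (Tc : Set Sseq) (p : PCond) : Prop where
  u_sub : ∀ ρ ∈ p.u, ρ ∈ Tc
  u_root : emptySeq ∈ p.u
  u_meet : ∀ ρ ∈ p.u, ∀ τ ∈ p.u, meetSeq ρ τ ∈ p.u
  lt_dom : ∀ a b, p.lt a b → a ∈ p.v ∧ b ∈ p.v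
  lt_irrefl : ∀ a, ¬ p.lt a a
  lt_trans : ∀ a b c, p.lt a b → p.lt b c → p.lt a c
  lt_ht : ∀ a b, p.lt a b → htOf a < htOf b
  lt_pred_linear : ∀ a b c, p.lt a c → p.lt b c → p.lt a b ∨ p.lt b a ∨ a = b
  f_dom : ∀ ρ : Sseq, p.f ρ ≠ none ↔ ρ ∈ p.u
  f_ran : ∀ ρ a, p.f ρ = some a → a ∈ p.v
  f_surj : ∀ a ∈ p.v, ∃ ρ ∈ p.u, p.f ρ = some a
  f_mono : ∀ ρ ∈ p.u, ∀ τ ∈ p.u, seqLT ρ τ →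
    ∀ a b, p.f ρ = some a → p.f τ = some b → p.lt a b
  f_ht : ∀ ρ a, p.f ρ = some a → htOf a = lg ρ
  c_dom : ∀ a, p.c a ≠ none ↔ a ∈ p.v
  c_spec : ∀ a b, p.lt a b → p.c a ≠ p.c b

/-- The extension order of `P(T)`. -/
def PLe (p q : PCond) : Prop :=
  p.u ⊆ q.u ∧ p.v ⊆ q.v ∧ (∀ a b, p.lt a b → q.lt a b) ∧
  (∀ ρ a, p.f ρ = some a → q.f ρ = some a) ∧
  ∀ a n, p.c a = some n → q.c a = some n

/-!
Add to `uᵖ` the meets `ρ ∩ τ` (`τ ∈ uᵖ ∪ {ρ}`) that it lacks, one at a time and shortest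
first; the last one is `ρ ∩ ρ = ρ`. A shortest missing meet `σ` can be added without breaking
closure under meets. Its image is placed in the branch of `<ₚ` below `b = f(τ₀)`, where `τ₀` is
the least node above `σ` (or the greatest one below it): if that branch has an element of height
`lg σ` it is reused; otherwise a fresh ordinal of height `lg σ` with a fresh colour is inserted
there, which is possible because `ω₁` is closed under `γ ↦ ω·γ + n`.
-/

abbrev Om : Type := omega1.{0}.ToType

lemma oVal_lt_oVal {γ δ : Om} : oVal γ < oVal δ ↔ γ < δ := by
  unfold oVal
  rw [Subtype.coe_lt_coe, OrderIso.lt_iff_lt]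

lemma oVal_lt_omega1 (γ : Om) : oVal γ < omega1.{0} :=
  ((Ordinal.ToType.mk (o := omega1.{0})).symm γ).2

lemma oVal_mk {β : Ordinal.{0}} (h : β < omega1.{0}) :
    oVal (Ordinal.ToType.mk (o := omega1.{0}) ⟨β, h⟩) = β := by
  unfold oVal
  rw [OrderIso.symm_apply_apply]

section Sequences

variable {ρ τ μ : Sseq}

lemma IsSeqOK.exists_eq_none_oVal_eq_lg (h : IsSeqOK ρ) : ∃ ξ, ρ ξ = none ∧ oVal ξ = lg ρ := by
  obtain ⟨ξ, hξ⟩ := h.2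
  exact csInf_mem (s := oVal '' {ξ | ρ ξ = none}) ⟨oVal ξ, ξ, hξ, rfl⟩

lemma IsSeqOK.ne_none_iff (h : IsSeqOK ρ) {ξ : Om} : ρ ξ ≠ none ↔ oVal ξ < lg ρ := by
  obtain ⟨ξ₀, h₀, hlg⟩ := h.exists_eq_none_oVal_eq_lg
  refine ⟨fun hξ => ?_, fun hξ hnone => ?_⟩
  · by_contra hle
    rw [not_lt, ← hlg, ← not_lt, oVal_lt_oVal, not_lt] at hle
    rcases hle.eq_or_lt with rfl | hlt
    · exact hξ h₀
    · exact h.1 ξ₀ ξ hlt hξ h₀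
  · exact (csInf_le (OrderBot.bddBelow (oVal '' {ξ | ρ ξ = none})) ⟨ξ, hnone, rfl⟩).not_gt hξ

lemma IsSeqOK.lg_lt_omega1 (h : IsSeqOK ρ) : lg ρ < omega1.{0} := by
  obtain ⟨ξ, -, hlg⟩ := h.exists_eq_none_oVal_eq_lg
  exact hlg ▸ oVal_lt_omega1 ξ

lemma seqLE_refl (ρ : Sseq) : seqLE ρ ρ := fun _ _ h => h

lemma seqLE.trans (h₁ : seqLE ρ τ) (h₂ : seqLE τ μ) : seqLE ρ μ :=
  fun ξ a h => h₂ ξ a (h₁ ξ a h)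

lemma seqLE.antisymm (h₁ : seqLE ρ τ) (h₂ : seqLE τ ρ) : ρ = τ := by
  funext ξ
  cases hρ : ρ ξ with
  | none => cases hτ : τ ξ with
    | none => rfl
    | some a => simpa [hρ] using h₂ ξ a hτ
  | some a => rw [h₁ ξ a hρ]

lemma seqLT.trans (h₁ : seqLT ρ τ) (h₂ : seqLT τ μ) : seqLT ρ μ :=
  ⟨h₁.1.trans h₂.1, fun e => h₂.2 (h₂.1.antisymm (e ▸ h₁.1))⟩

lemma emptySeq_seqLE (ρ : Sseq) : seqLE emptySeq ρ := fun _ _ h => by simp [emptySeq] at h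

lemma seqLE_of_lg_le (hρ : IsSeqOK ρ) (hτ : IsSeqOK τ) (hρμ : seqLE ρ μ) (hτμ : seqLE τ μ)
    (hlg : lg ρ ≤ lg τ) : seqLE ρ τ := by
  intro ξ a hξ
  obtain ⟨b, hb⟩ := Option.ne_none_iff_exists'.mp
    (hτ.ne_none_iff.mpr (((hρ.ne_none_iff (ξ := ξ)).mp (by simp [hξ])).trans_le hlg))
  have := hρμ ξ a hξ
  rw [hτμ ξ b hb, Option.some_inj] at this
  rw [hb, this]

lemma seqLE.lg_le (hρ : IsSeqOK ρ) (hτ : IsSeqOK τ) (h : seqLE ρ τ) : lg ρ ≤ lg τ := by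
  obtain ⟨ξ, hξ, hlg⟩ := hτ.exists_eq_none_oVal_eq_lg
  by_contra hlt
  obtain ⟨a, ha⟩ := Option.ne_none_iff_exists'.mp (hρ.ne_none_iff.mpr (hlg ▸ not_le.mp hlt))
  simp [h ξ a ha] at hξ

lemma seqLE.eq_of_lg_le (hρ : IsSeqOK ρ) (hτ : IsSeqOK τ) (h : seqLE ρ τ)
    (hlg : lg τ ≤ lg ρ) : ρ = τ :=
  h.antisymm (seqLE_of_lg_le hτ hρ (seqLE_refl τ) h hlg)

lemma seqLT.lg_lt (hρ : IsSeqOK ρ) (hτ : IsSeqOK τ) (h : seqLT ρ τ) : lg ρ < lg τ :=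
  (h.1.lg_le hρ hτ).lt_of_ne fun e => h.2 (h.1.eq_of_lg_le hρ hτ e.ge)

end Sequences

section Meets

variable {ρ τ σ : Sseq}

lemma meetSeq_comm (ρ τ : Sseq) : meetSeq ρ τ = meetSeq τ ρ := by
  funext ξ
  unfold meetSeq
  by_cases h : ∀ η, η ≤ ξ → ρ η = τ η
  · rw [if_pos h, if_pos fun η hη => (h η hη).symm, h ξ le_rfl]
  · rw [if_neg h, if_neg fun h' => h fun η hη => (h' η hη).symm]

lemma meetSeq_self (ρ : Sseq) : meetSeq ρ ρ = ρ := by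
  funext ξ
  simp [meetSeq]

lemma meetSeq_seqLE_left (ρ τ : Sseq) : seqLE (meetSeq ρ τ) ρ := by
  intro ξ a h
  unfold meetSeq at h
  split at h
  · exact h
  · cases h

lemma meetSeq_seqLE_right (ρ τ : Sseq) : seqLE (meetSeq ρ τ) τ :=
  meetSeq_comm τ ρ ▸ meetSeq_seqLE_left τ ρ

lemma IsSeqOK.meetSeq (h : IsSeqOK ρ) : IsSeqOK (meetSeq ρ τ) := by
  refine ⟨fun ξ η hξη hη => ?_, h.2.imp fun ξ hξ => by simp [_root_.meetSeq, hξ]⟩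
  unfold _root_.meetSeq at hη ⊢
  split at hη
  · next hagree => rw [if_pos fun ζ hζ => hagree ζ (hζ.trans hξη.le)]; exact h.1 ξ η hξη hη
  · exact absurd rfl hη

lemma seqLE_meetSeq (hσ : IsSeqOK σ) (hρ : seqLE σ ρ) (hτ : seqLE σ τ) :
    seqLE σ (meetSeq ρ τ) := by
  intro ξ a h
  refine (if_pos fun η hη => ?_).trans (hρ ξ a h)
  obtain ⟨b, hb⟩ : ∃ b, σ η = some b := by
    refine Option.ne_none_iff_exists'.mp ?_
    rcases hη.eq_or_lt with rfl | hlt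
    · simp [h]
    · exact hσ.1 η ξ hlt (by simp [h])
  rw [hρ η b hb, hτ η b hb]

lemma meetSeq_eq_left (hσ : IsSeqOK σ) (h : seqLE σ ρ) : meetSeq σ ρ = σ :=
  (meetSeq_seqLE_left σ ρ).antisymm (seqLE_meetSeq hσ (seqLE_refl σ) h)

/-- The meet of two sequences is the restriction of either to the first point where they differ. -/
lemma meetSeq_mem {Tc : Set Sseq} (hT : PAmbientOK Tc) (hρ : ρ ∈ Tc) (hτ : τ ∈ Tc) :
    meetSeq ρ τ ∈ Tc := by
  by_cases hall : ∀ η, ρ η = τ η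
  · rw [funext hall, meetSeq_self]
    exact hτ
  · push Not at hall
    obtain ⟨b, hb, hmin⟩ := wellFounded_lt.has_min {η | ρ η ≠ τ η} hall
    convert hT.2.2.1 ρ hρ b using 1
    funext ξ
    unfold meetSeq restrictSeq
    by_cases hξ : ξ < b
    · rw [if_pos hξ, if_pos fun η hη => not_not.mp fun hne => hmin η hne (hη.trans_lt hξ)]
    · rw [if_neg hξ, if_neg fun h => hb (h b (not_lt.mp hξ))]

end Meets

structure IsColoredTreeOrder (v : Finset Om) (lt : Om → Om → Prop) (c : Om → Option ℕ) :
    Prop where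
  lt_dom : ∀ a b, lt a b → a ∈ v ∧ b ∈ v
  lt_irrefl : ∀ a, ¬ lt a a
  lt_trans : ∀ a b c, lt a b → lt b c → lt a c
  lt_ht : ∀ a b, lt a b → htOf a < htOf b
  lt_pred_linear : ∀ a b c, lt a c → lt b c → lt a b ∨ lt b a ∨ a = b
  c_dom : ∀ a, c a ≠ none ↔ a ∈ v
  c_spec : ∀ a b, lt a b → c a ≠ c b

lemma PValid.isColoredTreeOrder {Tc : Set Sseq} {p : PCond} (hp : PValid Tc p) :
    IsColoredTreeOrder p.v p.lt p.c :=
  ⟨hp.lt_dom, hp.lt_irrefl, hp.lt_trans, hp.lt_ht, hp.lt_pred_linear, hp.c_dom, hp.c_spec⟩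

namespace IsColoredTreeOrder

variable {v : Finset Om} {lt : Om → Om → Prop} {c : Om → Option ℕ} {b x y z : Om}

lemma mem_of_le (hC : IsColoredTreeOrder v lt c) (hy : y ∈ v) (h : x = y ∨ lt x y) : x ∈ v := by
  rcases h with rfl | h
  exacts [hy, (hC.lt_dom x y h).1]

lemma lt_of_lt_of_le (hC : IsColoredTreeOrder v lt c) (hxy : lt x y) (hyz : y = z ∨ lt y z) :
    lt x z := by
  rcases hyz with rfl | hyz
  exacts [hxy, hC.lt_trans x y z hxy hyz]

lemma lt_of_le_of_lt (hC : IsColoredTreeOrder v lt c) (hxy : x = y ∨ lt x y) (hyz : lt y z) :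
    lt x z := by
  rcases hxy with rfl | hxy
  exacts [hyz, hC.lt_trans x y z hxy hyz]

lemma le_trans (hC : IsColoredTreeOrder v lt c) (hxy : x = y ∨ lt x y) (hyz : y = z ∨ lt y z) :
    x = z ∨ lt x z := by
  rcases hxy with rfl | hxy
  exacts [hyz, .inr (hC.lt_of_lt_of_le hxy hyz)]

lemma htOf_le (hC : IsColoredTreeOrder v lt c) (h : x = y ∨ lt x y) : htOf x ≤ htOf y := by
  rcases h with rfl | h
  exacts [le_rfl, (hC.lt_ht x y h).le]

lemma linear_of_le (hC : IsColoredTreeOrder v lt c) (hx : x = b ∨ lt x b) (hy : y = b ∨ lt y b) :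
    lt x y ∨ lt y x ∨ x = y := by
  rcases hx with rfl | hx
  · rcases hy with rfl | hy
    exacts [.inr (.inr rfl), .inr (.inl hy)]
  · rcases hy with rfl | hy
    exacts [.inl hx, hC.lt_pred_linear x y b hx hy]

lemma lt_of_htOf_lt (hC : IsColoredTreeOrder v lt c) (hx : x = b ∨ lt x b) (hy : y = b ∨ lt y b)
    (h : htOf x < htOf y) : lt x y := by
  rcases hC.linear_of_le hx hy with hxy | hyx | rfl
  exacts [hxy, absurd (hC.lt_ht y x hyx) h.not_gt, (h.ne rfl).elim]

end IsColoredTreeOrder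

section InsertFresh

variable (lt : Om → Om → Prop) (b : Om) (h : Ordinal.{0})

def branchBelow (x : Om) : Prop := (x = b ∨ lt x b) ∧ htOf x < h

def coneAbove (z : Om) : Prop := ∃ w, (w = b ∨ lt w b) ∧ h < htOf w ∧ (w = z ∨ lt w z)

/-- The order obtained by inserting a new point `a` into the branch below `b` at height
`htOf a`. -/
def insertLt (a : Om) (x y : Om) : Prop :=
  lt x y ∨ (y = a ∧ branchBelow lt b (htOf a) x) ∨ (x = a ∧ coneAbove lt b (htOf a) y)

variable {lt b h} {v : Finset Om} {c : Om → Option ℕ} {a x y z : Om}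

namespace IsColoredTreeOrder

lemma mem_of_coneAbove (hC : IsColoredTreeOrder v lt c) (hb : b ∈ v)
    (hz : coneAbove lt b h z) : z ∈ v := by
  obtain ⟨w, hw, -, rfl | hwz⟩ := hz
  exacts [hC.mem_of_le hb hw, (hC.lt_dom w z hwz).2]

lemma branchBelow_of_lt (hC : IsColoredTreeOrder v lt c) (hxy : lt x y)
    (hy : branchBelow lt b h y) : branchBelow lt b h x :=
  ⟨.inr (hC.lt_of_lt_of_le hxy hy.1), (hC.lt_ht x y hxy).trans hy.2⟩

lemma coneAbove_of_lt (hC : IsColoredTreeOrder v lt c) (hyz : lt y z)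
    (hy : coneAbove lt b h y) : coneAbove lt b h z :=
  let ⟨w, hw, hwh, hwy⟩ := hy
  ⟨w, hw, hwh, .inr (hC.lt_of_le_of_lt hwy hyz)⟩

lemma lt_htOf_of_coneAbove (hC : IsColoredTreeOrder v lt c) (hz : coneAbove lt b h z) :
    h < htOf z :=
  let ⟨_, _, hwh, hwz⟩ := hz
  hwh.trans_le (hC.htOf_le hwz)

lemma lt_of_branchBelow_of_coneAbove (hC : IsColoredTreeOrder v lt c)
    (hx : branchBelow lt b h x) (hz : coneAbove lt b h z) : lt x z :=
  let ⟨_, hw, hwh, hwz⟩ := hz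
  hC.lt_of_lt_of_le (hC.lt_of_htOf_lt hx.1 hw (hx.2.trans hwh)) hwz

lemma branchBelow_or_coneAbove_of_lt (hC : IsColoredTreeOrder v lt c)
    (hgap : ∀ y, (y = b ∨ lt y b) → htOf y ≠ h) (hz : coneAbove lt b h z) (hxz : lt x z) :
    branchBelow lt b h x ∨ coneAbove lt b h x := by
  obtain ⟨w, hw, hwh, hwz⟩ := hz
  rcases hC.linear_of_le (.inr hxz) hwz with hxw | hwx | rfl
  · have hx : x = b ∨ lt x b := .inr (hC.lt_of_lt_of_le hxw hw)
    rcases (hgap x hx).lt_or_gt with hxh | hxh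
    exacts [.inl ⟨hx, hxh⟩, .inr ⟨x, hx, hxh, .inl rfl⟩]
  · exact .inr ⟨w, hw, hwh, .inr hwx⟩
  · exact .inr ⟨x, hw, hwh, .inl rfl⟩

lemma ne_of_notMem (hC : IsColoredTreeOrder v lt c) (ha : a ∉ v) (h : lt x y) :
    x ≠ a ∧ y ≠ a :=
  ⟨fun e => ha (e ▸ (hC.lt_dom x y h).1), fun e => ha (e ▸ (hC.lt_dom x y h).2)⟩

lemma insertLt_trans (hC : IsColoredTreeOrder v lt c) (ha : a ∉ v) (hb : b ∈ v)
    (hxy : insertLt lt b a x y) (hyz : insertLt lt b a y z) : insertLt lt b a x z := by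
  have hlt {x y} (h : lt x y) := hC.ne_of_notMem ha h
  rcases hxy with hxy | ⟨hya, hx⟩ | ⟨hxa, hy⟩ <;> rcases hyz with hyz | ⟨hza, hy'⟩ | ⟨hya', hz⟩
  · exact .inl (hC.lt_trans x y z hxy hyz)
  · exact .inr (.inl ⟨hza, hC.branchBelow_of_lt hxy hy'⟩)
  · exact absurd hya' (hlt hxy).2
  · exact absurd hya (hlt hyz).1
  · exact absurd (hya ▸ hC.mem_of_le hb hy'.1) ha
  · exact .inl (hC.lt_of_branchBelow_of_coneAbove hx hz)
  · exact .inr (.inr ⟨hxa, hC.coneAbove_of_lt hyz hy⟩)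
  · exact absurd (hC.lt_htOf_of_coneAbove hy) hy'.2.not_gt
  · exact absurd (hya' ▸ hC.mem_of_coneAbove hb hy) ha

lemma insertLt_pred_linear (hC : IsColoredTreeOrder v lt c) (ha : a ∉ v) (hb : b ∈ v)
    (hgap : ∀ y, (y = b ∨ lt y b) → htOf y ≠ htOf a)
    (hxz : insertLt lt b a x z) (hyz : insertLt lt b a y z) :
    insertLt lt b a x y ∨ insertLt lt b a y x ∨ x = y := by
  have hlt {x y} (h : lt x y) := hC.ne_of_notMem ha h
  rcases hxz with hxz | ⟨hza, hx⟩ | ⟨hxa, hz⟩ <;> rcases hyz with hyz | ⟨hza', hy⟩ | ⟨hya, hz'⟩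
  · rcases hC.lt_pred_linear x y z hxz hyz with h | h | h
    exacts [.inl (.inl h), .inr (.inl (.inl h)), .inr (.inr h)]
  · exact absurd hza' (hlt hxz).2
  · rcases hC.branchBelow_or_coneAbove_of_lt hgap hz' hxz with hx | hx
    exacts [.inl (.inr (.inl ⟨hya, hx⟩)), .inr (.inl (.inr (.inr ⟨hya, hx⟩)))]
  · exact absurd hza (hlt hyz).2
  · rcases hC.linear_of_le hx.1 hy.1 with h | h | h
    exacts [.inl (.inl h), .inr (.inl (.inl h)), .inr (.inr h)]
  · exact absurd (hza ▸ hC.mem_of_coneAbove hb hz') ha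
  · rcases hC.branchBelow_or_coneAbove_of_lt hgap hz hyz with hy | hy
    exacts [.inr (.inl (.inr (.inl ⟨hxa, hy⟩))), .inl (.inr (.inr ⟨hxa, hy⟩))]
  · exact absurd (hza' ▸ hC.mem_of_coneAbove hb hz) ha
  · exact .inr (.inr (hxa.trans hya.symm))

lemma insert (hC : IsColoredTreeOrder v lt c) (ha : a ∉ v) (hb : b ∈ v)
    (hgap : ∀ y, (y = b ∨ lt y b) → htOf y ≠ htOf a) {n : ℕ} (hn : ∀ z ∈ v, c z ≠ some n) :
    IsColoredTreeOrder (insert a v) (insertLt lt b a) (Function.update c a (some n)) where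
  lt_dom x y := by
    rintro (hxy | ⟨rfl, hx⟩ | ⟨rfl, hy⟩)
    · exact ⟨Finset.mem_insert_of_mem (hC.lt_dom x y hxy).1,
        Finset.mem_insert_of_mem (hC.lt_dom x y hxy).2⟩
    · exact ⟨Finset.mem_insert_of_mem (hC.mem_of_le hb hx.1), Finset.mem_insert_self y v⟩
    · exact ⟨Finset.mem_insert_self x v, Finset.mem_insert_of_mem (hC.mem_of_coneAbove hb hy)⟩
  lt_irrefl x := by
    rintro (hx | ⟨rfl, hx⟩ | ⟨rfl, hx⟩)
    exacts [hC.lt_irrefl x hx, ha (hC.mem_of_le hb hx.1), ha (hC.mem_of_coneAbove hb hx)]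
  lt_trans _ _ _ := hC.insertLt_trans ha hb
  lt_ht x y := by
    rintro (hxy | ⟨rfl, hx⟩ | ⟨rfl, hy⟩)
    exacts [hC.lt_ht x y hxy, hx.2, hC.lt_htOf_of_coneAbove hy]
  lt_pred_linear _ _ _ := hC.insertLt_pred_linear ha hb hgap
  c_dom x := by
    rcases eq_or_ne x a with rfl | hxa
    · simp
    · simp [hxa, hC.c_dom]
  c_spec x y := by
    rintro (hxy | ⟨rfl, hx⟩ | ⟨rfl, hy⟩)
    · obtain ⟨hxa, hya⟩ := hC.ne_of_notMem ha hxy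
      simpa [hxa, hya] using hC.c_spec x y hxy
    · have hxv := hC.mem_of_le hb hx.1
      simpa [ne_of_mem_of_not_mem hxv ha] using hn x hxv
    · have hyv := hC.mem_of_coneAbove hb hy
      simpa [ne_of_mem_of_not_mem hyv ha] using (hn y hyv).symm

end IsColoredTreeOrder

noncomputable def PCond.addNode (p : PCond) (σ : Sseq) (a : Om) (lt : Om → Om → Prop) (c : Om → Option ℕ) :
    PCond where
  u := insert σ p.u
  v := insert a p.v
  lt := lt
  f := Function.update p.f σ (some a)
  c := c

section AddNode

variable {Tc : Set Sseq} {p : PCond} {σ τ : Sseq} {a y : Om} {lt : Om → Om → Prop}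
  {c : Om → Option ℕ}

lemma PValid.mem_u_of_f_eq_some (hp : PValid Tc p) (h : p.f τ = some y) : τ ∈ p.u :=
  (hp.f_dom τ).mp (by simp [h])

lemma PValid.addNode_f_eq_some (hp : PValid Tc p) (hσu : σ ∉ p.u) :
    (p.addNode σ a lt c).f τ = some y ↔ τ = σ ∧ y = a ∨ p.f τ = some y := by
  rcases eq_or_ne τ σ with rfl | hτσ
  · have : p.f τ = none := not_not.mp fun h => hσu ((hp.f_dom τ).mp h)
    simp [PCond.addNode, this, eq_comm]
  · simp [PCond.addNode, hτσ]

lemma PValid.addNode (hp : PValid Tc p) (hσT : σ ∈ Tc) (hσu : σ ∉ p.u)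
    (hmeet : ∀ τ ∈ p.u, meetSeq σ τ ∈ p.u ∨ meetSeq σ τ = σ)
    (hC : IsColoredTreeOrder (insert a p.v) lt c) (hlt : ∀ x y, p.lt x y → lt x y)
    (ha : htOf a = lg σ) (hdown : ∀ τ y, p.f τ = some y → seqLT τ σ → lt y a)
    (hup : ∀ τ z, p.f τ = some z → seqLT σ τ → lt a z) :
    PValid Tc (p.addNode σ a lt c) where
  u_sub τ hτ := by
    rcases Finset.mem_insert.mp hτ with rfl | hτ
    exacts [hσT, hp.u_sub τ hτ]
  u_root := Finset.mem_insert_of_mem hp.u_root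
  u_meet ρ hρ τ hτ := by
    have hσ {τ} (hτ : τ ∈ p.u) : meetSeq σ τ ∈ insert σ p.u := by
      rcases hmeet τ hτ with h | h
      · exact Finset.mem_insert_of_mem h
      · rw [h]
        exact Finset.mem_insert_self σ p.u
    rcases Finset.mem_insert.mp hρ with hρσ | hρ <;>
      rcases Finset.mem_insert.mp hτ with hτσ | hτ
    · rw [hρσ, hτσ, meetSeq_self]
      exact Finset.mem_insert_self σ p.u
    · rw [hρσ]
      exact hσ hτ
    · rw [hτσ, meetSeq_comm]
      exact hσ hρ
    · exact Finset.mem_insert_of_mem (hp.u_meet ρ hρ τ hτ)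
  lt_dom := hC.lt_dom
  lt_irrefl := hC.lt_irrefl
  lt_trans := hC.lt_trans
  lt_ht := hC.lt_ht
  lt_pred_linear := hC.lt_pred_linear
  f_dom τ := by
    rcases eq_or_ne τ σ with rfl | hτσ
    · simp [PCond.addNode]
    · simp [PCond.addNode, hτσ, hp.f_dom τ]
  f_ran τ y h := by
    rcases (hp.addNode_f_eq_some hσu).mp h with ⟨-, rfl⟩ | h
    exacts [Finset.mem_insert_self y p.v, Finset.mem_insert_of_mem (hp.f_ran τ y h)]
  f_surj y hy := by
    rcases Finset.mem_insert.mp hy with rfl | hy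
    · exact ⟨σ, Finset.mem_insert_self σ p.u, by simp [PCond.addNode]⟩
    · obtain ⟨τ, hτ, hτy⟩ := hp.f_surj y hy
      exact ⟨τ, Finset.mem_insert_of_mem hτ, (hp.addNode_f_eq_some hσu).mpr (.inr hτy)⟩
  f_mono ρ _ τ _ hρτ y z hy hz := by
    rcases (hp.addNode_f_eq_some hσu).mp hy with ⟨hρσ, hya⟩ | hy <;>
      rcases (hp.addNode_f_eq_some hσu).mp hz with ⟨hτσ, hza⟩ | hz
    · exact absurd (hρσ.trans hτσ.symm) hρτ.2
    · exact hya ▸ hup τ z hz (hρσ ▸ hρτ)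
    · exact hza ▸ hdown ρ y hy (hτσ ▸ hρτ)
    · exact hlt y z (hp.f_mono ρ (hp.mem_u_of_f_eq_some hy) τ (hp.mem_u_of_f_eq_some hz) hρτ
        y z hy hz)
  f_ht τ y h := by
    rcases (hp.addNode_f_eq_some hσu).mp h with ⟨rfl, rfl⟩ | h
    exacts [ha, hp.f_ht τ y h]
  c_dom := hC.c_dom
  c_spec := hC.c_spec

lemma PValid.le_addNode (hp : PValid Tc p) (hσu : σ ∉ p.u) (hlt : ∀ x y, p.lt x y → lt x y)
    (hc : ∀ x n, p.c x = some n → c x = some n) : PLe p (p.addNode σ a lt c) :=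
  ⟨Finset.subset_insert σ p.u, Finset.subset_insert a p.v, hlt,
    fun _ _ h => (hp.addNode_f_eq_some hσu).mpr (.inr h), hc⟩

end AddNode

lemma exists_htOf_eq_notMem {α : Ordinal.{0}} (hα : α < omega1.{0}) (v : Finset Om) :
    ∃ a ∉ v, htOf a = α := by
  have hω : Ordinal.omega0 < omega1.{0} :=
    Cardinal.omega0_lt_ord.mpr Cardinal.aleph0_lt_aleph_one
  have hlt (n : ℕ) : Ordinal.omega0 * α + n < omega1.{0} :=
    Ordinal.isPrincipal_add_ord (Cardinal.aleph0_le_aleph 1)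
      (Ordinal.isPrincipal_mul_ord (Cardinal.aleph0_le_aleph 1) hω hα)
      ((Ordinal.natCast_lt_omega0 n).trans hω)
  let g (n : ℕ) : Om := Ordinal.ToType.mk ⟨_, hlt n⟩
  have hg : Function.Injective g := fun m n h => by
    simpa using congrArg Subtype.val ((Ordinal.ToType.mk (o := omega1.{0})).injective h)
  obtain ⟨_, ⟨n, rfl⟩, hn⟩ := (Set.infinite_range_of_injective hg).exists_notMem_finset v
  refine ⟨g n, hn, ?_⟩
  rw [htOf, oVal_mk, Ordinal.mul_add_div _ Ordinal.omega0_ne_zero,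
    Ordinal.div_eq_zero_of_lt (Ordinal.natCast_lt_omega0 n), add_zero]

lemma exists_forall_ne_some (v : Finset Om) (c : Om → Option ℕ) :
    ∃ n : ℕ, ∀ z ∈ v, c z ≠ some n := by
  obtain ⟨_, ⟨n, rfl⟩, hn⟩ :=
    (Set.infinite_range_of_injective (Option.some_injective ℕ)).exists_notMem_finset (v.image c)
  exact ⟨n, fun z hz h => hn (Finset.mem_image.mpr ⟨z, hz, h⟩)⟩

section Anchor

variable {u : Finset Sseq} {σ : Sseq}

lemma exists_max_seqLT (hu : ∀ τ ∈ u, IsSeqOK τ) (hroot : emptySeq ∈ u)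
    (hσu : σ ∉ u) : ∃ τ₀ ∈ u, seqLT τ₀ σ ∧ ∀ τ ∈ u, seqLT τ σ → seqLE τ τ₀ := by
  have hne : (u.filter (seqLT · σ)).Nonempty :=
    ⟨emptySeq, Finset.mem_filter.mpr ⟨hroot, emptySeq_seqLE σ, fun e => hσu (e ▸ hroot)⟩⟩
  obtain ⟨τ₀, hτ₀, hmax⟩ := (u.filter (seqLT · σ)).exists_max_image lg hne
  obtain ⟨hτ₀u, hτ₀σ⟩ := Finset.mem_filter.mp hτ₀
  refine ⟨τ₀, hτ₀u, hτ₀σ, fun τ hτ hτσ => ?_⟩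
  exact seqLE_of_lg_le (hu τ hτ) (hu τ₀ hτ₀u) hτσ.1 hτ₀σ.1
    (hmax τ (Finset.mem_filter.mpr ⟨hτ, hτσ⟩))

lemma exists_min_seqLT (hu : ∀ τ ∈ u, IsSeqOK τ) (hσ : IsSeqOK σ)
    (hmeet : ∀ ρ ∈ u, ∀ τ ∈ u, meetSeq ρ τ ∈ u) (hσu : σ ∉ u) (hne : ∃ τ ∈ u, seqLT σ τ) :
    ∃ τ₀ ∈ u, seqLT σ τ₀ ∧ ∀ τ ∈ u, seqLT σ τ → seqLE τ₀ τ := by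
  obtain ⟨τ₀, hτ₀, hmin⟩ := (u.filter (seqLT σ ·)).exists_min_image lg
    (hne.imp fun τ ⟨hτ, hστ⟩ => Finset.mem_filter.mpr ⟨hτ, hστ⟩)
  obtain ⟨hτ₀u, hστ₀⟩ := Finset.mem_filter.mp hτ₀
  refine ⟨τ₀, hτ₀u, hστ₀, fun τ hτ hστ => ?_⟩
  have hμ := hmeet τ₀ hτ₀u τ hτ
  have hσμ : seqLT σ (meetSeq τ₀ τ) :=
    ⟨seqLE_meetSeq hσ hστ₀.1 hστ.1, fun e => hσu (e ▸ hμ)⟩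
  have hμτ₀ : meetSeq τ₀ τ = τ₀ := (meetSeq_seqLE_left τ₀ τ).eq_of_lg_le (hu _ hμ) (hu τ₀ hτ₀u)
    (hmin _ (Finset.mem_filter.mpr ⟨hμ, hσμ⟩))
  exact hμτ₀ ▸ meetSeq_seqLE_right τ₀ τ

end Anchor

/-- The role of `f(τ₀)` for `τ₀` the least node of `uᵖ` above `σ` or, if there is none, the
greatest node below `σ`: `f(σ)` has to be placed just below it. -/
def IsAnchor (p : PCond) (σ : Sseq) (b : Om) : Prop :=
  (∀ τ y, p.f τ = some y → seqLT τ σ → y = b ∨ p.lt y b) ∧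
    ∀ τ z, p.f τ = some z → seqLT σ τ → (b = z ∨ p.lt b z) ∧ lg σ < htOf b

section Extension

variable {Tc : Set Sseq} {p : PCond} {σ : Sseq}

lemma PValid.le_of_seqLE (hp : PValid Tc p) {τ τ' : Sseq} {y y' : Om} (hy : p.f τ = some y)
    (hy' : p.f τ' = some y') (h : seqLE τ τ') : y = y' ∨ p.lt y y' := by
  by_cases hττ' : τ = τ'
  · subst hττ'
    exact .inl (Option.some_inj.mp (hy.symm.trans hy'))
  · exact .inr (hp.f_mono τ (hp.mem_u_of_f_eq_some hy) τ' (hp.mem_u_of_f_eq_some hy') ⟨h, hττ'⟩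
      y y' hy hy')

lemma PValid.exists_isAnchor (hp : PValid Tc p) (hseq : ∀ τ ∈ Tc, IsSeqOK τ) (hσT : σ ∈ Tc)
    (hσu : σ ∉ p.u) : ∃ b ∈ p.v, IsAnchor p σ b := by
  have hu τ (hτ : τ ∈ p.u) := hseq τ (hp.u_sub τ hτ)
  have hσ := hseq σ hσT
  have hf τ (hτ : τ ∈ p.u) : ∃ b, p.f τ = some b := Option.ne_none_iff_exists'.mp ((hp.f_dom τ).mpr hτ)
  by_cases habove : ∃ τ ∈ p.u, seqLT σ τ
  · obtain ⟨τ₀, hτ₀, hστ₀, hmin⟩ := exists_min_seqLT hu hσ hp.u_meet hσu habove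
    obtain ⟨b, hb⟩ := hf τ₀ hτ₀
    refine ⟨b, hp.f_ran τ₀ b hb, fun τ y hy hτσ => ?_, fun τ z hz hστ => ⟨?_, ?_⟩⟩
    · exact hp.le_of_seqLE hy hb (hτσ.trans hστ₀).1
    · exact hp.le_of_seqLE hb hz (hmin τ (hp.mem_u_of_f_eq_some hz) hστ)
    · exact hp.f_ht τ₀ b hb ▸ hστ₀.lg_lt hσ (hu τ₀ hτ₀)
  · obtain ⟨τ₀, hτ₀, hτ₀σ, hmax⟩ := exists_max_seqLT hu hp.u_root hσu
    obtain ⟨b, hb⟩ := hf τ₀ hτ₀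
    refine ⟨b, hp.f_ran τ₀ b hb, fun τ y hy hτσ => ?_, fun τ z hz hστ => ?_⟩
    · exact hp.le_of_seqLE hy hb (hmax τ (hp.mem_u_of_f_eq_some hy) hτσ)
    · exact absurd ⟨τ, hp.mem_u_of_f_eq_some hz, hστ⟩ habove

lemma PValid.exists_addNode_of_le_anchor (hp : PValid Tc p) (hseq : ∀ τ ∈ Tc, IsSeqOK τ)
    (hσT : σ ∈ Tc) (hσu : σ ∉ p.u) (hmeet : ∀ τ ∈ p.u, meetSeq σ τ ∈ p.u ∨ meetSeq σ τ = σ)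
    {b x : Om} (hb : b ∈ p.v) (hanchor : IsAnchor p σ b) (hxb : x = b ∨ p.lt x b)
    (hx : htOf x = lg σ) : ∃ q, PValid Tc q ∧ PLe p q ∧ q.u = insert σ p.u := by
  have hC := hp.isColoredTreeOrder
  have hxv : insert x p.v = p.v := Finset.insert_eq_of_mem (hC.mem_of_le hb hxb)
  refine ⟨p.addNode σ x p.lt p.c, hp.addNode hσT hσu hmeet (by rwa [hxv]) (fun _ _ h => h) hx
    (fun τ y hy hτσ => ?_) (fun τ z hz hστ => ?_), hp.le_addNode hσu (fun _ _ h => h)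
    (fun _ _ h => h), rfl⟩
  · refine hC.lt_of_htOf_lt (hanchor.1 τ y hy hτσ) hxb ?_
    rw [hp.f_ht τ y hy, hx]
    exact hτσ.lg_lt (hseq τ (hp.u_sub τ (hp.mem_u_of_f_eq_some hy))) (hseq σ hσT)
  · obtain ⟨hbz, hσb⟩ := hanchor.2 τ z hz hστ
    rcases hC.le_trans hxb hbz with rfl | hxz
    · exact absurd (hC.htOf_le hbz) (hx ▸ hσb).not_ge
    · exact hxz

lemma PValid.exists_addNode_of_anchor_gap (hp : PValid Tc p) (hseq : ∀ τ ∈ Tc, IsSeqOK τ)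
    (hσT : σ ∈ Tc) (hσu : σ ∉ p.u) (hmeet : ∀ τ ∈ p.u, meetSeq σ τ ∈ p.u ∨ meetSeq σ τ = σ)
    {b : Om} (hb : b ∈ p.v) (hanchor : IsAnchor p σ b)
    (hgap : ∀ x, (x = b ∨ p.lt x b) → htOf x ≠ lg σ) :
    ∃ q, PValid Tc q ∧ PLe p q ∧ q.u = insert σ p.u := by
  have hC := hp.isColoredTreeOrder
  obtain ⟨a, hav, ha⟩ := exists_htOf_eq_notMem (hseq σ hσT).lg_lt_omega1 p.v
  obtain ⟨n, hn⟩ := exists_forall_ne_some p.v p.c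
  refine ⟨p.addNode σ a (insertLt p.lt b a) (Function.update p.c a (some n)),
    hp.addNode hσT hσu hmeet (hC.insert hav hb (ha ▸ hgap) hn) (fun _ _ => .inl) ha
      (fun τ y hy hτσ => .inr (.inl ⟨rfl, hanchor.1 τ y hy hτσ, ?_⟩))
      (fun τ z hz hστ => .inr (.inr ⟨rfl, b, .inl rfl, ha ▸ (hanchor.2 τ z hz hστ).2,
        (hanchor.2 τ z hz hστ).1⟩)),
    hp.le_addNode hσu (fun _ _ => .inl) (fun x m hx => ?_), rfl⟩
  · rw [hp.f_ht τ y hy, ha]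
    exact hτσ.lg_lt (hseq τ (hp.u_sub τ (hp.mem_u_of_f_eq_some hy))) (hseq σ hσT)
  · have hxv : x ∈ p.v := (hp.c_dom x).mp (by simp [hx])
    rwa [Function.update_of_ne (ne_of_mem_of_not_mem hxv hav)]

lemma PValid.exists_addNode (hp : PValid Tc p) (hseq : ∀ τ ∈ Tc, IsSeqOK τ)
    (hσT : σ ∈ Tc) (hσu : σ ∉ p.u) (hmeet : ∀ τ ∈ p.u, meetSeq σ τ ∈ p.u ∨ meetSeq σ τ = σ) :
    ∃ q, PValid Tc q ∧ PLe p q ∧ q.u = insert σ p.u := by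
  obtain ⟨b, hb, hanchor⟩ := hp.exists_isAnchor hseq hσT hσu
  by_cases hx : ∃ x, (x = b ∨ p.lt x b) ∧ htOf x = lg σ
  · obtain ⟨x, hxb, hx⟩ := hx
    exact hp.exists_addNode_of_le_anchor hseq hσT hσu hmeet hb hanchor hxb hx
  · exact hp.exists_addNode_of_anchor_gap hseq hσT hσu hmeet hb hanchor
      fun x hxb hx' => hx ⟨x, hxb, hx'⟩

end Extension

lemma PLe.refl (p : PCond) : PLe p p :=
  ⟨subset_rfl, subset_rfl, fun _ _ => id, fun _ _ => id, fun _ _ => id⟩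

lemma PLe.trans {p q r : PCond} (hpq : PLe p q) (hqr : PLe q r) : PLe p r :=
  ⟨hpq.1.trans hqr.1, hpq.2.1.trans hqr.2.1, fun a b h => hqr.2.2.1 a b (hpq.2.2.1 a b h),
    fun ρ a h => hqr.2.2.2.1 ρ a (hpq.2.2.2.1 ρ a h),
    fun a n h => hqr.2.2.2.2 a n (hpq.2.2.2.2 a n h)⟩

noncomputable def missingMeets (ρ : Sseq) (u : Finset Sseq) : Finset Sseq :=
  (insert ρ u).image (meetSeq ρ) \ u

section MissingMeets

variable {ρ σ : Sseq} {u : Finset Sseq}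

lemma mem_missingMeets_self (h : ρ ∉ u) : ρ ∈ missingMeets ρ u :=
  Finset.mem_sdiff.mpr ⟨Finset.mem_image.mpr ⟨ρ, Finset.mem_insert_self ρ u, meetSeq_self ρ⟩, h⟩

lemma exists_eq_meetSeq_of_mem_missingMeets (h : σ ∈ missingMeets ρ u) :
    ∃ τ, meetSeq ρ τ = σ := by
  obtain ⟨τ, -, hτ⟩ := Finset.mem_image.mp (Finset.mem_sdiff.mp h).1
  exact ⟨τ, hτ⟩

lemma IsSeqOK.of_mem_missingMeets (hρ : IsSeqOK ρ) (h : σ ∈ missingMeets ρ u) : IsSeqOK σ :=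
  let ⟨_, hτ⟩ := exists_eq_meetSeq_of_mem_missingMeets h
  hτ ▸ hρ.meetSeq

lemma seqLE_of_mem_missingMeets (h : σ ∈ missingMeets ρ u) : seqLE σ ρ :=
  let ⟨τ, hτ⟩ := exists_eq_meetSeq_of_mem_missingMeets h
  hτ ▸ meetSeq_seqLE_left ρ τ

lemma mem_of_mem_missingMeets {Tc : Set Sseq} (hT : PAmbientOK Tc) (hρ : ρ ∈ Tc)
    (hu : ∀ τ ∈ u, τ ∈ Tc) (h : σ ∈ missingMeets ρ u) : σ ∈ Tc := by
  obtain ⟨τ, hτ, rfl⟩ := Finset.mem_image.mp (Finset.mem_sdiff.mp h).1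
  rcases Finset.mem_insert.mp hτ with rfl | hτ
  exacts [meetSeq_mem hT hρ hρ, meetSeq_mem hT hρ (hu τ hτ)]

lemma meetSeq_mem_or_eq_of_forall_lg_le (hρ : IsSeqOK ρ)
    (hσ : σ ∈ missingMeets ρ u) (hmin : ∀ π ∈ missingMeets ρ u, lg σ ≤ lg π) :
    ∀ τ ∈ u, meetSeq σ τ ∈ u ∨ meetSeq σ τ = σ := by
  intro τ hτ
  have hσρ := seqLE_of_mem_missingMeets hσ
  have hσOK := hρ.of_mem_missingMeets hσ
  have hπOK : IsSeqOK (meetSeq ρ τ) := hρ.meetSeq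
  rcases le_or_gt (lg σ) (lg (meetSeq ρ τ)) with hle | hlt
  · refine .inr (meetSeq_eq_left hσOK ?_)
    exact (seqLE_of_lg_le hσOK hπOK hσρ (meetSeq_seqLE_left ρ τ) hle).trans
      (meetSeq_seqLE_right ρ τ)
  · have hπu : meetSeq ρ τ ∈ u := by
      by_contra hπu
      refine (hmin _ (Finset.mem_sdiff.mpr ⟨?_, hπu⟩)).not_gt hlt
      exact Finset.mem_image.mpr ⟨τ, Finset.mem_insert_of_mem hτ, rfl⟩
    have hπσ := seqLE_of_lg_le hπOK hσOK (meetSeq_seqLE_left ρ τ) hσρ hlt.le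
    refine .inl (((seqLE_meetSeq hσOK.meetSeq ?_ (meetSeq_seqLE_right σ τ)).antisymm
      (seqLE_meetSeq hπOK hπσ (meetSeq_seqLE_right ρ τ))) ▸ hπu)
    exact (meetSeq_seqLE_left σ τ).trans hσρ

lemma card_missingMeets_insert_lt (hρ : IsSeqOK ρ) (hσ : σ ∈ missingMeets ρ u) :
    (missingMeets ρ (insert σ u)).card < (missingMeets ρ u).card := by
  refine (Finset.card_le_card fun π hπ => ?_).trans_lt (Finset.card_erase_lt_of_mem hσ)
  obtain ⟨hπ, hπu⟩ := Finset.mem_sdiff.mp hπ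
  obtain ⟨τ, hτ, rfl⟩ := Finset.mem_image.mp hπ
  refine Finset.mem_erase.mpr ⟨fun e => hπu (e ▸ Finset.mem_insert_self σ u),
    Finset.mem_sdiff.mpr ⟨Finset.mem_image.mpr ⟨τ, ?_, rfl⟩,
      fun h => hπu (Finset.mem_insert_of_mem h)⟩⟩
  rcases Finset.mem_insert.mp hτ with rfl | hτ
  · exact Finset.mem_insert_self _ u
  rcases Finset.mem_insert.mp hτ with rfl | hτ
  · rw [meetSeq_comm, meetSeq_eq_left (hρ.of_mem_missingMeets hσ)
      (seqLE_of_mem_missingMeets hσ)] at hπu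
    exact absurd (Finset.mem_insert_self τ u) hπu
  · exact Finset.mem_insert_of_mem hτ

end MissingMeets

/-- For every `ρ ∈ T`, the set `ℰ_ρ` of conditions with `ρ ∈ uᵖ` is dense in `P(T)`. -/
theorem PCond_dense (Tc : Set Sseq) (hT : PAmbientOK Tc) (ρ : Sseq) (hρ : ρ ∈ Tc) :
    ∀ p : PCond, PValid Tc p →
      ∃ q : PCond, PValid Tc q ∧ PLe p q ∧ ρ ∈ q.u := by
  intro p hp
  induction hn : (missingMeets ρ p.u).card using Nat.strong_induction_on generalizing p with
  | _ n ih =>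
  by_cases hρu : ρ ∈ p.u
  · exact ⟨p, hp, PLe.refl p, hρu⟩
  obtain ⟨σ, hσ, hmin⟩ :=
    (missingMeets ρ p.u).exists_min_image lg ⟨ρ, mem_missingMeets_self hρu⟩
  have hρOK := hT.1 ρ hρ
  obtain ⟨q, hq, hpq, hqu⟩ := hp.exists_addNode hT.1 (mem_of_mem_missingMeets hT hρ hp.u_sub hσ)
    (Finset.mem_sdiff.mp hσ).2 (meetSeq_mem_or_eq_of_forall_lg_le hρOK hσ hmin)
  obtain ⟨r, hr, hqr, hρr⟩ :=
    ih _ (hn ▸ hqu ▸ card_missingMeets_insert_lt hρOK hσ) q hq rfl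
  exact ⟨r, hr, hpq.trans hqr, hρr⟩
end InsertFresh
end
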